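/- arXiv:2403.09300 — 3 statements merged into one kernel-verified Lean document; each statement's English description precedes it below -/
import Mathlib

section
/- If G1 and G2 are two Markov equivalent MAGs over the same vertex set, then their sets of r-orders coincide: Π^r(G1) = Π^r(G2). -/
/-!
Common framework: mixed graphs, paths, colliders, m-separation, MAGs,
removability, Markov boundaries, latent projection, orders.
-/

/-- A mixed graph over a vertex set `verts`, with directed edges `dir` and
bidirected edges `bi`. -/
structure MixedGraph (V : Type*) where
  verts : Set V
  dir : V → V → Prop
  bi : V → V → Prop
  bi_symm : ∀ {a b : V}, bi a b → bi b a
  dir_mem : ∀ {a b : V}, dir a b → a ∈ verts ∧ b ∈ verts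
  bi_mem : ∀ {a b : V}, bi a b → a ∈ verts ∧ b ∈ verts

namespace MixedGraph

variable {V : Type*}

/-- Two vertices are neighbors (adjacent) if joined by a directed or bidirected edge. -/
def adj (G : MixedGraph V) (a b : V) : Prop := G.dir a b ∨ G.dir b a ∨ G.bi a b

/-- `a` is an ancestor of `b` (every vertex is an ancestor of itself). -/
def anc (G : MixedGraph V) (a b : V) : Prop := Relation.ReflTransGen G.dir a b

/-- The set of neighbors of `a`. -/
def neighbors (G : MixedGraph V) (a : V) : Set V := {b | b ≠ a ∧ G.adj a b}

/-- The set of parents of `a`. -/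
def parents (G : MixedGraph V) (a : V) : Set V := {b | G.dir b a}

/-- The set of children of `a`. -/
def children (G : MixedGraph V) (a : V) : Set V := {b | G.dir a b}

/-- Co-parents of `a` (in a DAG): non-neighbors sharing a common child with `a`. -/
def coparents (G : MixedGraph V) (a : V) : Set V :=
  {b | b ≠ a ∧ ¬ G.adj a b ∧ ∃ c, G.dir a c ∧ G.dir b c}

/-- The district of `a`: vertices joined to `a` by a path of bidirected edges
(including `a` itself). -/
def district (G : MixedGraph V) (a : V) : Set V := {b | Relation.ReflTransGen G.bi b a}

/-- `PaP(a) = Pa(a) ∪ Dis(a) ∪ Pa(Dis(a))`. -/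
def paP (G : MixedGraph V) (a : V) : Set V :=
  G.parents a ∪ G.district a ∪ ⋃ b ∈ G.district a, G.parents b

/-- The induced subgraph of `G` over `W`. -/
def induce (G : MixedGraph V) (W : Set V) : MixedGraph V where
  verts := G.verts ∩ W
  dir a b := G.dir a b ∧ a ∈ W ∧ b ∈ W
  bi a b := G.bi a b ∧ a ∈ W ∧ b ∈ W
  bi_symm h := ⟨G.bi_symm h.1, h.2.2, h.2.1⟩
  dir_mem h := ⟨⟨(G.dir_mem h.1).1, h.2.1⟩, (G.dir_mem h.1).2, h.2.2⟩
  bi_mem h := ⟨⟨(G.bi_mem h.1).1, h.2.1⟩, (G.bi_mem h.1).2, h.2.2⟩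

end MixedGraph

/-- Possible orientations of an edge along a path: `fwd` is `a → b`,
`bwd` is `a ← b`, `bidir` is `a ↔ b`. -/
inductive EdgeDir
  | fwd | bwd | bidir

/-- Validity of an orientation mark between consecutive path vertices. -/
def edirValid {V : Type*} (G : MixedGraph V) (a b : V) : EdgeDir → Prop
  | .fwd => G.dir a b
  | .bwd => G.dir b a
  | .bidir => G.bi a b

/-- The edge has an arrowhead at its second (right) endpoint. -/
def headAt2 (e : EdgeDir) : Prop := e = .fwd ∨ e = .bidir

/-- The edge has an arrowhead at its first (left) endpoint. -/
def headAt1 (e : EdgeDir) : Prop := e = .bwd ∨ e = .bidir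

/-- A path in a mixed graph `G` from `x` to `y`: a sequence of distinct vertices
`vert 0, …, vert len` together with an oriented edge of `G` between consecutive
vertices. -/
structure MPath {V : Type*} (G : MixedGraph V) (x y : V) where
  len : ℕ
  len_pos : 0 < len
  vert : ℕ → V
  edir : ℕ → EdgeDir
  first : vert 0 = x
  last : vert len = y
  mem : ∀ i, i ≤ len → vert i ∈ G.verts
  inj : ∀ i j, i ≤ len → j ≤ len → vert i = vert j → i = j
  valid : ∀ i, i < len → edirValid G (vert i) (vert (i + 1)) (edir i)

namespace MPath

variable {V : Type*} {G : MixedGraph V} {x y : V}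

/-- The vertex at interior position `i` (where `0 < i < len`) is a collider on the path:
both incident path edges have an arrowhead at it. -/
def collider (p : MPath G x y) (i : ℕ) : Prop :=
  headAt2 (p.edir (i - 1)) ∧ headAt1 (p.edir i)

/-- The path is blocked by `Z`: some interior vertex is a collider that is not an
ancestor of any vertex of `Z ∪ {x, y}`, or a non-collider belonging to `Z`. -/
def blocked (p : MPath G x y) (Z : Set V) : Prop :=
  ∃ i, 0 < i ∧ i < p.len ∧
    ((p.collider i ∧ ∀ w ∈ Z ∪ ({x, y} : Set V), ¬ G.anc (p.vert i) w) ∨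
     (¬ p.collider i ∧ p.vert i ∈ Z))

/-- A collider path: every interior vertex is a collider on the path. -/
def isColliderPath (p : MPath G x y) : Prop :=
  ∀ i, 0 < i → i < p.len → p.collider i

/-- An inducing path relative to `W2`: every interior non-collider belongs to `W2`,
and every interior collider is an ancestor of `x` or of `y`. -/
def isInducing (p : MPath G x y) (W2 : Set V) : Prop :=
  ∀ i, 0 < i → i < p.len →
    (p.collider i → G.anc (p.vert i) x ∨ G.anc (p.vert i) y) ∧
    (¬ p.collider i → p.vert i ∈ W2)

end MPath

/-- `Z` m-separates `x` and `y` in `G`: every path between `x` and `y` is blocked by `Z`. -/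
def mSep {V : Type*} (G : MixedGraph V) (x y : V) (Z : Set V) : Prop :=
  ∀ p : MPath G x y, p.blocked Z

namespace MixedGraph

variable {V : Type*}

/-- The Markov boundary of `a` in `G`: vertices `b ≠ a` with a collider path to `a`. -/
def mb (G : MixedGraph V) (a : V) : Set V :=
  {b | b ≠ a ∧ ∃ p : MPath G b a, p.isColliderPath}

/-- `G` is a maximal ancestral graph (MAG): no directed cycles, no almost directed
cycles, and every pair of distinct non-neighbor vertices is m-separated by some set. -/
structure IsMAG (G : MixedGraph V) : Prop where
  no_dir_cycle : ∀ a b, G.dir a b → ¬ G.anc b a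
  no_almost_dir_cycle : ∀ a b, G.bi a b → ¬ G.anc b a
  maximal : ∀ a ∈ G.verts, ∀ b ∈ G.verts, a ≠ b → ¬ G.adj a b →
    ∃ Z ⊆ G.verts \ {a, b}, mSep G a b Z

/-- `G` is a DAG: a MAG with no bidirected edges. -/
def IsDAG (G : MixedGraph V) : Prop := G.IsMAG ∧ ∀ a b, ¬ G.bi a b

/-- `x` is removable in `G`: `G` and the induced subgraph `G[verts ∖ {x}]` impose the
same m-separation relations among the vertices of `verts ∖ {x}`. -/
def Removable (G : MixedGraph V) (x : V) : Prop :=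
  ∀ y z, y ∈ G.verts → z ∈ G.verts → y ≠ x → z ≠ x → y ≠ z →
    ∀ Z ⊆ G.verts \ {x, y, z},
      (mSep G y z Z ↔ mSep (G.induce (G.verts \ {x})) y z Z)

/-- There is an inducing path between `a` and `b` in `G` relative to `W2`. -/
def InducingAdj (G : MixedGraph V) (W2 : Set V) (a b : V) : Prop :=
  (∃ p : MPath G a b, p.isInducing W2) ∨ (∃ p : MPath G b a, p.isInducing W2)

/-- The latent projection of `G` onto `W1`: distinct `a, b ∈ W1` are joined iff there is
an inducing path between them in `G` relative to `G.verts ∖ W1`; the edge is `a → b` if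
`a` is an ancestor of `b` in `G` but not conversely, and `a ↔ b` if neither is an
ancestor of the other. -/
def project (G : MixedGraph V) (W1 : Set V) : MixedGraph V where
  verts := W1
  dir a b := a ∈ W1 ∧ b ∈ W1 ∧ a ≠ b ∧ InducingAdj G (G.verts \ W1) a b ∧
    G.anc a b ∧ ¬ G.anc b a
  bi a b := a ∈ W1 ∧ b ∈ W1 ∧ a ≠ b ∧ InducingAdj G (G.verts \ W1) a b ∧
    ¬ G.anc a b ∧ ¬ G.anc b a
  bi_symm h :=
    ⟨h.2.1, h.1, h.2.2.1.symm, Or.symm h.2.2.2.1, h.2.2.2.2.2, h.2.2.2.2.1⟩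
  dir_mem h := ⟨h.1, h.2.1⟩
  bi_mem h := ⟨h.1, h.2.1⟩

/-- Two mixed graphs over the same vertex set impose exactly the same m-separation
relations. -/
def MarkovEquiv (G1 G2 : MixedGraph V) : Prop :=
  ∀ a ∈ G1.verts, ∀ b ∈ G1.verts, a ≠ b → ∀ Z ⊆ G1.verts \ {a, b},
    (mSep G1 a b Z ↔ mSep G2 a b Z)

/-- A list of vertices is an order over (the vertex set of) `G` if it lists each vertex
exactly once. -/
def IsOrder (G : MixedGraph V) (l : List V) : Prop :=
  l.Nodup ∧ ∀ v, v ∈ l ↔ v ∈ G.verts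

/-- An r-order of `G`: an order `(X₁, …, Xₙ)` such that each `Xᵢ` is removable in the
induced subgraph `G[{Xᵢ, …, Xₙ}]`. -/
def IsROrder (G : MixedGraph V) (l : List V) : Prop :=
  IsOrder G l ∧ ∀ (i : ℕ) (h : i < l.length),
    Removable (G.induce {v | v ∈ l.drop i}) (l.get ⟨i, h⟩)

/-- A c-order of a DAG `G`: an order `(X₁, …, Xₙ)` such that each `Xᵢ` has no children
in the induced subgraph `G[{Xᵢ, …, Xₙ}]`. -/
def IsCOrder (G : MixedGraph V) (l : List V) : Prop :=
  IsOrder G l ∧ ∀ (i : ℕ) (h : i < l.length),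
    ∀ v, ¬ (G.induce {v' | v' ∈ l.drop i}).dir (l.get ⟨i, h⟩) v

/-- The maximum in-degree of `G`. -/
noncomputable def deltaIn (G : MixedGraph V) : ℕ :=
  sSup {n | ∃ a ∈ G.verts, n = (G.parents a).ncard}

/-- `Δin⁺(G)`: the maximum of `|PaP(a)|` over the vertices of `G`. -/
noncomputable def deltaInPlus (G : MixedGraph V) : ℕ :=
  sSup {n | ∃ a ∈ G.verts, n = (G.paP a).ncard}

/-- `G` is diamond-free: it contains no induced subgraph on four vertices `a, b, c, d`
whose skeleton has exactly the edges a–b, a–c, a–d, b–d, c–d (with b, c non-adjacent). -/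
def DiamondFree (G : MixedGraph V) : Prop :=
  ¬ ∃ a b c d : V, a ∈ G.verts ∧ b ∈ G.verts ∧ c ∈ G.verts ∧ d ∈ G.verts ∧
    a ≠ b ∧ a ≠ c ∧ a ≠ d ∧ b ≠ c ∧ b ≠ d ∧ c ≠ d ∧
    G.adj a b ∧ G.adj a c ∧ G.adj a d ∧ G.adj b d ∧ G.adj c d ∧ ¬ G.adj b c

end MixedGraph

/-- The cost of an order `(X₁, …, Xₙ)`: `Σₜ |Ne(Xₜ; G_{Vₜ})|` where `Vₜ = {Xₜ, …, Xₙ}`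
and `G_{Vₜ}` is the latent projection of `G` onto `Vₜ` (the term for `t = n` is zero). -/
noncomputable def orderCost {V : Type*} (G : MixedGraph V) : List V → ℕ
  | [] => 0
  | x :: rest => ((G.project {v | v ∈ x :: rest}).neighbors x).ncard + orderCost G rest


/-! ### Auxiliary development -/

namespace MixedGraph

variable {V : Type*}

/-- Ancestors of a set. -/
def An (G : MixedGraph V) (S : Set V) : Set V := {v | ∃ w ∈ S, G.anc v w}

lemma An.mono {G : MixedGraph V} {S T : Set V} (h : S ⊆ T) : G.An S ⊆ G.An T :=
  fun _ ⟨w, hw, ha⟩ => ⟨w, h hw, ha⟩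

lemma mem_An_self {G : MixedGraph V} {S : Set V} {v : V} (h : v ∈ S) : v ∈ G.An S :=
  ⟨v, h, Relation.ReflTransGen.refl⟩

lemma An_trans {G : MixedGraph V} {S : Set V} {v w : V} (h : G.anc v w) (hw : w ∈ G.An S) :
    v ∈ G.An S := by
  obtain ⟨u, hu, ha⟩ := hw
  exact ⟨u, hu, h.trans ha⟩

lemma An_An {G : MixedGraph V} {S : Set V} : G.An (G.An S) = G.An S := by
  ext v
  constructor
  · rintro ⟨w, hw, ha⟩; exact An_trans ha hw
  · exact fun h => mem_An_self h

section Ancestral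

variable {G : MixedGraph V}
variable (hd : ∀ a b, G.dir a b → ¬ G.anc b a) (hb : ∀ a b, G.bi a b → ¬ G.anc b a)

include hd in
lemma dir_irrefl {a : V} : ¬ G.dir a a := fun h => hd a a h Relation.ReflTransGen.refl

include hd in
lemma dir_asymm {a b : V} (h : G.dir a b) : ¬ G.dir b a := fun h' =>
  hd a b h (Relation.ReflTransGen.single h')

include hb in
lemma bi_irrefl {a : V} : ¬ G.bi a a := fun h => hb a a h Relation.ReflTransGen.refl

include hb in
lemma dir_bi_excl {a b : V} (h : G.dir a b) : ¬ G.bi a b := fun h' =>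
  hb b a (G.bi_symm h') (Relation.ReflTransGen.single h)

include hd in
lemma anc_ne_of_dir {a b : V} (h : G.dir a b) : a ≠ b := by
  rintro rfl; exact dir_irrefl hd h

end Ancestral

end MixedGraph

/-! ### Walks -/

open MixedGraph

/-- A walk: like `MPath` but with no injectivity and no positivity requirement. -/
structure MWalk {V : Type*} (G : MixedGraph V) (x y : V) where
  len : ℕ
  vert : ℕ → V
  edir : ℕ → EdgeDir
  first : vert 0 = x
  last : vert len = y
  mem : ∀ i, i ≤ len → vert i ∈ G.verts
  valid : ∀ i, i < len → edirValid G (vert i) (vert (i + 1)) (edir i)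

namespace MWalk

variable {V : Type*} {G : MixedGraph V} {x y : V}

def collider (p : MWalk G x y) (i : ℕ) : Prop :=
  headAt2 (p.edir (i - 1)) ∧ headAt1 (p.edir i)

/-- A good walk relative to sets `N` (allowed noncolliders) and `S`
(colliders must be ancestors of `S`). -/
def Good (p : MWalk G x y) (N S : Set V) : Prop :=
  ∀ i, 0 < i → i < p.len →
    (p.collider i → p.vert i ∈ G.An S) ∧ (¬ p.collider i → p.vert i ∈ N)

end MWalk

namespace MPath

variable {V : Type*} {G : MixedGraph V} {x y : V}

def Good (p : MPath G x y) (N S : Set V) : Prop :=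
  ∀ i, 0 < i → i < p.len →
    (p.collider i → p.vert i ∈ G.An S) ∧ (¬ p.collider i → p.vert i ∈ N)

def toWalk (p : MPath G x y) : MWalk G x y :=
  ⟨p.len, p.vert, p.edir, p.first, p.last, p.mem, p.valid⟩

lemma toWalk_good {p : MPath G x y} {N S : Set V} (h : p.Good N S) : p.toWalk.Good N S := h

lemma not_blocked_iff_good (p : MPath G x y) (Z : Set V) :
    ¬ p.blocked Z ↔ p.Good {v | v ∉ Z} (Z ∪ {x, y}) := by
  unfold blocked Good MixedGraph.An
  constructor
  · intro h i hi1 hi2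
    constructor
    · intro hc
      by_contra hno
      exact h ⟨i, hi1, hi2, Or.inl ⟨hc, by
        intro w hw ha
        exact hno ⟨w, hw, ha⟩⟩⟩
    · intro hc hz
      exact h ⟨i, hi1, hi2, Or.inr ⟨hc, hz⟩⟩
  · rintro h ⟨i, hi1, hi2, hcase⟩
    rcases hcase with ⟨hc, hall⟩ | ⟨hc, hz⟩
    · obtain ⟨w, hw, ha⟩ := (h i hi1 hi2).1 hc
      exact hall w hw ha
    · exact (h i hi1 hi2).2 hc hz

end MPath
namespace MWalk

variable {V : Type*} {G : MixedGraph V} {x y : V} {N S : Set V}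

lemma edir_eq_fwd_of_not_headAt1 {e : EdgeDir} (h : ¬ headAt1 e) : e = .fwd := by
  cases e <;> simp [headAt1] at * <;> tauto

lemma edir_eq_bwd_of_not_headAt2 {e : EdgeDir} (h : ¬ headAt2 e) : e = .bwd := by
  cases e <;> simp [headAt2] at * <;> tauto

lemma headAt1_of_ne_fwd {e : EdgeDir} (h : e ≠ .fwd) : headAt1 e := by
  cases e <;> simp [headAt1] at * <;> tauto

lemma anc_of_fwd_chain (W : MWalk G x y) {i l : ℕ} (hil : i ≤ l) (hl : l ≤ W.len)
    (hfwd : ∀ k, i ≤ k → k < l → W.edir k = .fwd) :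
    G.anc (W.vert i) (W.vert l) := by
  induction l, hil using Nat.le_induction with
  | base => exact Relation.ReflTransGen.refl
  | succ l hl' ih =>
    have h1 : G.anc (W.vert i) (W.vert l) :=
      ih (by omega) (fun k hk1 hk2 => hfwd k hk1 (by omega))
    have h2 : G.dir (W.vert l) (W.vert (l + 1)) := by
      have hv := W.valid l (by omega)
      rw [hfwd l (by omega) (by omega)] at hv
      exact hv
    exact h1.tail h2

/-- Splice out the portion of a walk between two occurrences of the same vertex. -/
def splice (W : MWalk G x y) (i j : ℕ) (hij : i < j) (hj : j ≤ W.len)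
    (hv : W.vert i = W.vert j) : MWalk G x y where
  len := W.len - (j - i)
  vert m := if m ≤ i then W.vert m else W.vert (m + (j - i))
  edir m := if m < i then W.edir m else W.edir (m + (j - i))
  first := by simp [W.first]
  last := by
    by_cases h : W.len - (j - i) ≤ i
    · have h1 : W.len - (j - i) = i := by omega
      have h2 : j = W.len := by omega
      simp only [h1, if_pos (le_refl i)]
      rw [hv, h2, W.last]
    · have h1 : W.len - (j - i) + (j - i) = W.len := by omega
      simp only [if_neg h, h1, W.last]
  mem := by
    intro m hm
    by_cases h : m ≤ i
    · simp only [if_pos h]; exact W.mem m (by omega)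
    · simp only [if_neg h]; exact W.mem _ (by omega)
  valid := by
    intro m hm
    rcases lt_trichotomy m i with h | h | h
    · have h1 : m + 1 ≤ i := by omega
      simp only [if_pos (le_of_lt h), if_pos h1, if_pos h]
      exact W.valid m (by omega)
    · subst h
      have h1 : ¬ (m + 1 ≤ m) := by omega
      have h2 : ¬ (m < m) := by omega
      simp only [if_pos (le_refl m), if_neg h1, if_neg h2]
      have h3 : m + (j - m) = j := by omega
      have h4 : m + 1 + (j - m) = j + 1 := by omega
      rw [h3, h4, hv]
      exact W.valid j (by omega)
    · have h1 : ¬ (m ≤ i) := by omega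
      have h2 : ¬ (m + 1 ≤ i) := by omega
      have h3 : ¬ (m < i) := by omega
      simp only [if_neg h1, if_neg h2, if_neg h3]
      have h4 : m + 1 + (j - i) = m + (j - i) + 1 := by omega
      rw [h4]
      exact W.valid _ (by omega)

lemma splice_len (W : MWalk G x y) (i j : ℕ) (hij : i < j) (hj : j ≤ W.len)
    (hv : W.vert i = W.vert j) : (W.splice i j hij hj hv).len = W.len - (j - i) := rfl

theorem splice_good {W : MWalk G x y} (hg : W.Good N S)
    {i j : ℕ} (hij : i < j) (hj : j ≤ W.len) (hv : W.vert i = W.vert j) :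
    (W.splice i j hij hj hv).Good N S := by
  intro m hm0 hmlen
  have hlen' : (W.splice i j hij hj hv).len = W.len - (j - i) := rfl
  rw [hlen'] at hmlen
  rcases lt_trichotomy m i with h | h | h
  · -- unchanged prefix
    have e1 : (W.splice i j hij hj hv).vert m = W.vert m := if_pos (le_of_lt h)
    have e2 : (W.splice i j hij hj hv).edir (m - 1) = W.edir (m - 1) := if_pos (by omega)
    have e3 : (W.splice i j hij hj hv).edir m = W.edir m := if_pos h
    have hcol : (W.splice i j hij hj hv).collider m ↔ W.collider m := by
      unfold collider; rw [e2, e3]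
    rw [e1]
    constructor
    · intro hc; exact (hg m hm0 (by omega)).1 (hcol.mp hc)
    · intro hc; exact (hg m hm0 (by omega)).2 (fun h' => hc (hcol.mpr h'))
  · -- junction
    subst h
    have e1 : (W.splice m j hij hj hv).vert m = W.vert m := if_pos (le_refl m)
    have e2 : (W.splice m j hij hj hv).edir (m - 1) = W.edir (m - 1) := if_pos (by omega)
    have e3 : (W.splice m j hij hj hv).edir m = W.edir j := by
      have h2 : m + (j - m) = j := by omega
      conv_rhs => rw [← h2]
      exact if_neg (by omega)
    have hjlt : j < W.len := by omega
    have hjm : W.collider j → W.vert m ∈ G.An S := by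
      intro hc
      rw [hv]; exact (hg j (by omega) hjlt).1 hc
    rw [e1]
    constructor
    · intro hc
      unfold collider at hc
      rw [e2, e3] at hc
      by_cases hci : W.collider m
      · exact (hg m hm0 (by omega)).1 hci
      by_cases hcj : W.collider j
      · exact hjm hcj
      -- both old occurrences noncolliders: chain argument
      have hfi : W.edir m = .fwd := by
        apply edir_eq_fwd_of_not_headAt1
        intro hcontra
        exact hci ⟨hc.1, hcontra⟩
      have hfj : W.edir (j - 1) = .bwd := by
        apply edir_eq_bwd_of_not_headAt2
        intro hcontra
        exact hcj ⟨hcontra, hc.2⟩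
      classical
      have hex : ∃ l, m ≤ l ∧ W.edir l ≠ .fwd := by
        refine ⟨j - 1, by omega, ?_⟩
        rw [hfj]; intro hcon; cases hcon
      set l := Nat.find hex with hldef
      obtain ⟨hl1, hl2⟩ := Nat.find_spec hex
      rw [← hldef] at hl1 hl2
      have hmin : ∀ k, m ≤ k → k < l → W.edir k = .fwd := by
        intro k hk1 hk2
        by_contra hcon
        exact Nat.find_min hex hk2 ⟨hk1, hcon⟩
      have hlle : l ≤ j - 1 := Nat.find_min' hex ⟨by omega, by rw [hfj]; intro hcon; cases hcon⟩
      have hlgt : m < l := by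
        rcases Nat.lt_or_ge m l with h | h
        · exact h
        · exfalso; have : l = m := by omega
          rw [this] at hl2; exact hl2 hfi
      have hanc : G.anc (W.vert m) (W.vert l) :=
        anc_of_fwd_chain W (by omega) (by omega) hmin
      have hlcol : W.collider l := by
        constructor
        · have : W.edir (l - 1) = .fwd := hmin (l - 1) (by omega) (by omega)
          rw [this]; exact Or.inl rfl
        · exact headAt1_of_ne_fwd hl2
      have : W.vert l ∈ G.An S := (hg l (by omega) (by omega)).1 hlcol
      exact MixedGraph.An_trans hanc this
    · intro hc
      unfold collider at hc
      rw [e2, e3] at hc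
      by_cases h1 : headAt2 (W.edir (m - 1))
      · have h2 : ¬ headAt1 (W.edir j) := fun h' => hc ⟨h1, h'⟩
        have : ¬ W.collider j := fun h' => h2 h'.2
        rw [hv]; exact (hg j (by omega) hjlt).2 this
      · have : ¬ W.collider m := fun h' => h1 h'.1
        exact (hg m hm0 (by omega)).2 this
  · -- shifted suffix
    have h1 : ¬ (m ≤ i) := by omega
    have h2 : ¬ (m < i) := by omega
    have h3 : ¬ (m - 1 < i) := by omega
    have e1 : (W.splice i j hij hj hv).vert m = W.vert (m + (j - i)) := if_neg h1
    have e2 : (W.splice i j hij hj hv).edir (m - 1) = W.edir (m + (j - i) - 1) := by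
      have e2' : (W.splice i j hij hj hv).edir (m - 1) = W.edir (m - 1 + (j - i)) := if_neg h3
      rw [show m - 1 + (j - i) = m + (j - i) - 1 from by omega] at e2'
      exact e2'
    have e3 : (W.splice i j hij hj hv).edir m = W.edir (m + (j - i)) := if_neg h2
    have hcol : (W.splice i j hij hj hv).collider m ↔ W.collider (m + (j - i)) := by
      unfold collider; rw [e2, e3]
    rw [e1]
    have hint : 0 < m + (j - i) ∧ m + (j - i) < W.len := by omega
    constructor
    · intro hc; exact (hg _ hint.1 hint.2).1 (hcol.mp hc)
    · intro hc; exact (hg _ hint.1 hint.2).2 (fun h' => hc (hcol.mpr h'))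

/-- From a good walk between distinct endpoints one can extract a good path. -/
theorem exists_good_path (hxy : x ≠ y) (W : MWalk G x y) (hg : W.Good N S) :
    ∃ p : MPath G x y, p.Good N S := by
  classical
  obtain ⟨n, hn⟩ : ∃ n, W.len ≤ n := ⟨W.len, le_refl _⟩
  induction n generalizing W with
  | zero =>
    exfalso
    have h0 : W.len = 0 := by omega
    have h1 : W.vert 0 = W.vert W.len := by rw [h0]
    rw [W.first, W.last] at h1
    exact hxy h1
  | succ n ih =>
    by_cases hinj : ∀ i j, i ≤ W.len → j ≤ W.len → W.vert i = W.vert j → i = j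
    · have hpos : 0 < W.len := by
        rcases Nat.eq_zero_or_pos W.len with h | h
        · exfalso
          have h1 : W.vert 0 = W.vert W.len := by rw [h]
          rw [W.first, W.last] at h1
          exact hxy h1
        · exact h
      exact ⟨⟨W.len, hpos, W.vert, W.edir, W.first, W.last, W.mem, hinj, W.valid⟩, hg⟩
    · push_neg at hinj
      obtain ⟨i, j, hi, hj, hv, hne⟩ := hinj
      rcases Nat.lt_or_ge i j with hij | hij
      · have W' := W.splice i j hij hj hv
        refine ih (W.splice i j hij hj hv) (splice_good hg hij hj hv) ?_
        rw [splice_len]; omega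
      · have hij' : j < i := by omega
        refine ih (W.splice j i hij' hi hv.symm) (splice_good hg hij' hi hv.symm) ?_
        rw [splice_len]; omega

end MWalk
/-! ### Bridges between m-separation, good paths and good walks -/

namespace MixedGraph

variable {V : Type*}

lemma not_mSep_iff_good {G : MixedGraph V} {a b : V} {Z : Set V} :
    ¬ mSep G a b Z ↔ ∃ p : MPath G a b, p.Good {v | v ∉ Z} (Z ∪ {a, b}) := by
  rw [mSep, not_forall]
  exact exists_congr fun p => p.not_blocked_iff_good Z

lemma not_mSep_of_walk {G : MixedGraph V} {a b : V} {Z : Set V} (hab : a ≠ b)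
    (W : MWalk G a b) (hg : W.Good {v | v ∉ Z} (Z ∪ {a, b})) : ¬ mSep G a b Z :=
  not_mSep_iff_good.mpr (W.exists_good_path hab hg)

/-! ### Lifting from induced subgraphs -/

lemma induce_dir_le {G : MixedGraph V} {W : Set V} {a b : V} :
    (G.induce W).dir a b → G.dir a b := fun h => h.1

lemma induce_anc_le {G : MixedGraph V} {W : Set V} {a b : V} :
    (G.induce W).anc a b → G.anc a b := fun h => by
  unfold anc at *
  induction h with
  | refl => exact Relation.ReflTransGen.refl
  | tail _ hd ih => exact ih.tail (induce_dir_le hd)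

lemma induce_An_le {G : MixedGraph V} {W S : Set V} :
    (G.induce W).An S ⊆ G.An S := fun _ ⟨w, hw, ha⟩ => ⟨w, hw, induce_anc_le ha⟩

lemma induce_edirValid_le {G : MixedGraph V} {W : Set V} {a b : V} {e : EdgeDir} :
    edirValid (G.induce W) a b e → edirValid G a b e := by
  cases e <;> exact fun h => h.1

end MixedGraph

open MixedGraph

/-- Lift a path in an induced subgraph to the ambient graph. -/
def MPath.liftInduce {G : MixedGraph V} {W : Set V} {a b : V}
    (p : MPath (G.induce W) a b) : MPath G a b where
  len := p.len
  len_pos := p.len_pos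
  vert := p.vert
  edir := p.edir
  first := p.first
  last := p.last
  mem := fun i hi => (p.mem i hi).1
  inj := p.inj
  valid := fun i hi => induce_edirValid_le (p.valid i hi)

lemma MPath.liftInduce_good {G : MixedGraph V} {W : Set V} {a b : V}
    {p : MPath (G.induce W) a b} {N S N' S' : Set V}
    (h : p.Good N S) (hN : N ⊆ N') (hS : S ⊆ S') : p.liftInduce.Good N' S' := by
  intro i h1 h2
  obtain ⟨hc, hnc⟩ := h i h1 h2
  exact ⟨fun hcol => An.mono hS (induce_An_le (hc hcol)),
    fun hncol => hN (hnc hncol)⟩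

lemma MPath.vert_mem_induce {G : MixedGraph V} {W : Set V} {a b : V}
    (p : MPath (G.induce W) a b) {i : ℕ} (hi : i ≤ p.len) : p.vert i ∈ W :=
  (p.mem i hi).2

namespace MixedGraph

/-- Free direction: m-separation in `G` implies m-separation in any induced subgraph. -/
lemma mSep_induce_of_mSep {G : MixedGraph V} {W : Set V} {a b : V} {Z : Set V}
    (h : mSep G a b Z) : mSep (G.induce W) a b Z := by
  by_contra hcon
  rw [not_mSep_iff_good] at hcon
  obtain ⟨p, hp⟩ := hcon
  exact (not_mSep_iff_good.mpr ⟨p.liftInduce, p.liftInduce_good hp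
    (le_refl _) (le_refl _)⟩) h

/-- L4: an active path in `G[V∖x]` given `Z` is active in `G` given `Z ∪ {x}`. -/
lemma not_mSep_insert_of_induce {G : MixedGraph V} {x a b : V} {Z : Set V}
    (h : ¬ mSep (G.induce (G.verts \ {x})) a b Z) : ¬ mSep G a b (insert x Z) := by
  rw [not_mSep_iff_good] at h ⊢
  obtain ⟨p, hp⟩ := h
  refine ⟨p.liftInduce, ?_⟩
  intro i h1 h2
  obtain ⟨hc, hnc⟩ := hp i h1 h2
  constructor
  · intro hcol
    refine An.mono ?_ (induce_An_le (hc hcol))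
    intro v hv
    rcases hv with hv | hv
    · exact Or.inl (Or.inr hv)
    · exact Or.inr hv
  · intro hncol
    have h1' : p.vert i ∉ Z := hnc hncol
    have hmem : p.vert i ∈ G.verts \ {x} := p.vert_mem_induce (le_of_lt h2)
    have h2' : p.vert i ≠ x := fun hcon => hmem.2 hcon
    intro hcon
    rcases hcon with hc | hc
    · exact h2' hc
    · exact h1' hc

/-- If `x ∈ Z` separates, and `x` is removable, then `Z \ {x}` separates. -/
lemma mSep_drop_x {G : MixedGraph V} {x a b : V} {Z : Set V} (hrem : G.Removable x)
    (ha : a ∈ G.verts) (hb : b ∈ G.verts) (hax : a ≠ x) (hbx : b ≠ x) (hab : a ≠ b)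
    (hZ : Z ⊆ G.verts \ {a, b}) (hsep : mSep G a b Z) : mSep G a b (Z \ {x}) := by
  have h1 : mSep (G.induce (G.verts \ {x})) a b (Z \ {x}) := by
    by_contra hcon
    have h2 := not_mSep_insert_of_induce hcon
    rcases Classical.em (x ∈ Z) with hx | hx
    · have : insert x (Z \ {x}) = Z := by
        ext v; simp only [Set.mem_insert_iff, Set.mem_diff, Set.mem_singleton_iff]
        constructor
        · rintro (rfl | ⟨h, _⟩) <;> [exact hx; exact h]
        · intro hv; by_cases hvx : v = x
          · exact Or.inl hvx
          · exact Or.inr ⟨hv, hvx⟩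
      rw [this] at h2; exact h2 hsep
    · have hzz : Z \ {x} = Z := by
        ext v; simp only [Set.mem_diff, Set.mem_singleton_iff]
        exact ⟨fun h => h.1, fun h => ⟨h, fun hc => hx (hc ▸ h)⟩⟩
      rw [hzz] at hcon
      exact hcon (mSep_induce_of_mSep hsep)
  have hZ' : Z \ {x} ⊆ G.verts \ {x, a, b} := by
    intro v hv
    have := hZ hv.1
    refine ⟨this.1, ?_⟩
    intro hcon
    rcases hcon with h | h | h
    · exact hv.2 h
    · exact this.2 (Or.inl h)
    · exact this.2 (Or.inr h)
  exact (hrem a b ha hb hax hbx hab (Z \ {x}) hZ').mpr h1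

/-- The purely observational condition `C`: any separable pair (away from `x`)
can be separated without using `x`. -/
def Cprop (G : MixedGraph V) (x : V) : Prop :=
  ∀ a b, a ∈ G.verts → b ∈ G.verts → a ≠ x → b ≠ x → a ≠ b →
    ∀ Z ⊆ G.verts \ {a, b}, mSep G a b Z →
      ∃ Z' ⊆ G.verts \ {a, b}, x ∉ Z' ∧ mSep G a b Z'

lemma Cprop_of_removable {G : MixedGraph V} {x : V} (hrem : G.Removable x) :
    Cprop G x := by
  intro a b ha hb hax hbx hab Z hZ hsep
  refine ⟨Z \ {x}, fun v hv => hZ hv.1, fun hc => hc.2 rfl, ?_⟩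
  exact mSep_drop_x hrem ha hb hax hbx hab hZ hsep

lemma Cprop_transfer {G1 G2 : MixedGraph V} {x : V} (hv : G1.verts = G2.verts)
    (heq : MarkovEquiv G1 G2) (hC : Cprop G1 x) : Cprop G2 x := by
  intro a b ha hb hax hbx hab Z hZ hsep
  rw [← hv] at ha hb hZ
  obtain ⟨Z', hZ', hxZ', hsep'⟩ := hC a b ha hb hax hbx hab Z hZ
    ((heq a ha b hb hab Z hZ).mpr hsep)
  exact ⟨Z', hv ▸ hZ', hxZ', (heq a ha b hb hab Z' hZ').mp hsep'⟩

/-- `x`-inducing connection between `a` and `b`: a path whose interior noncolliders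
are all `x` and whose colliders are ancestors of `{a, b}`. -/
def IndCon (G : MixedGraph V) (x a b : V) : Prop :=
  ∃ p : MPath G a b, p.Good {x} {a, b}

lemma IndCon.not_mSep {G : MixedGraph V} {x a b : V} (h : IndCon G x a b)
    {Z : Set V} (hxZ : x ∉ Z) : ¬ mSep G a b Z := by
  obtain ⟨p, hp⟩ := h
  rw [not_mSep_iff_good]
  refine ⟨p, fun i h1 h2 => ?_⟩
  obtain ⟨hc, hnc⟩ := hp i h1 h2
  refine ⟨fun hcol => An.mono (Set.subset_union_right) (hc hcol), fun hncol => ?_⟩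
  have : p.vert i = x := hnc hncol
  rw [this]; exact hxZ

lemma adj_of_IndCon {G : MixedGraph V} {x : V} (hG : G.IsMAG) (hC : Cprop G x)
    {a b : V} (ha : a ∈ G.verts) (hb : b ∈ G.verts) (hax : a ≠ x) (hbx : b ≠ x)
    (hab : a ≠ b) (h : IndCon G x a b) : G.adj a b := by
  by_contra hadj
  obtain ⟨Z, hZ, hsep⟩ := hG.maximal a ha b hb hab hadj
  obtain ⟨Z', hZ', hxZ', hsep'⟩ := hC a b ha hb hax hbx hab Z hZ hsep
  exact h.not_mSep hxZ' hsep'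

end MixedGraph
/-! ### Orientation forcing under the inducing-adjacency closure -/

namespace MixedGraph

variable {V : Type*}

section Forcing

variable {G : MixedGraph V} {x : V}

/-- A two-edge path through `x` that is a non-collider at `x` gives an
`x`-inducing connection. -/
lemma IndCon.of_edges {a b : V} (ha : a ∈ G.verts) (hxv : x ∈ G.verts)
    (hbv : b ∈ G.verts) (hax : a ≠ x) (hbx : b ≠ x) (hab : a ≠ b)
    {E1 E2 : EdgeDir} (h1 : edirValid G a x E1) (h2 : edirValid G x b E2)
    (hnc : ¬ (headAt2 E1 ∧ headAt1 E2)) : IndCon G x a b := by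
  refine ⟨⟨2, by omega,
    (fun i => match i with | 0 => a | 1 => x | _ => b),
    (fun i => match i with | 0 => E1 | _ => E2),
    rfl, rfl, ?_, ?_, ?_⟩, ?_⟩
  · intro i hi
    match i, hi with
    | 0, _ => exact ha
    | 1, _ => exact hxv
    | 2, _ => exact hbv
  · intro i j hi hj hv
    match i, hi, j, hj, hv with
    | 0, _, 0, _, _ => rfl
    | 1, _, 1, _, _ => rfl
    | 2, _, 2, _, _ => rfl
    | 0, _, 1, _, hv => exact absurd hv hax
    | 0, _, 2, _, hv => exact absurd hv hab
    | 1, _, 2, _, hv => exact absurd hv.symm hbx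
    | 1, _, 0, _, hv => exact absurd hv.symm hax
    | 2, _, 0, _, hv => exact absurd hv.symm hab
    | 2, _, 1, _, hv => exact absurd hv hbx
  · intro i hi
    match i, hi with
    | 0, _ => exact h1
    | 1, _ => exact h2
  · intro i hi1 hi2
    have hi2' : i < 2 := hi2
    have : i = 1 := by omega
    subst this
    constructor
    · intro hcol
      exact absurd ⟨hcol.1, hcol.2⟩ hnc
    · intro _
      rfl

variable (hd : ∀ a b, G.dir a b → ¬ G.anc b a) (hb : ∀ a b, G.bi a b → ¬ G.anc b a)
variable (hInd : ∀ a b, a ∈ G.verts → b ∈ G.verts → a ≠ x → b ≠ x → a ≠ b →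
  IndCon G x a b → G.adj a b)

include hd hb hInd in
/-- Shortcut a directed two-path through `x`. -/
lemma dir_shortcut {a b : V} (h1 : G.dir a x) (h2 : G.dir x b) (hab : a ≠ b) :
    G.dir a b := by
  have hax : a ≠ x := anc_ne_of_dir hd h1
  have hbx : b ≠ x := (anc_ne_of_dir hd h2).symm
  have ha : a ∈ G.verts := (G.dir_mem h1).1
  have hbv : b ∈ G.verts := (G.dir_mem h2).2
  have hxv : x ∈ G.verts := (G.dir_mem h1).2
  have hanc : G.anc a b := Relation.ReflTransGen.head h1 (Relation.ReflTransGen.single h2)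
  have hcon : IndCon G x a b := IndCon.of_edges ha hxv hbv hax hbx hab
    (E1 := .fwd) (E2 := .fwd) h1 h2 (by simp [headAt1])
  rcases hInd a b ha hbv hax hbx hab hcon with h | h | h
  · exact h
  · exact absurd hanc (hd b a h)
  · exact absurd hanc (hb b a (G.bi_symm h))

/-- Directed chains of a given length. -/
def dchain (G : MixedGraph V) : ℕ → V → V → Prop
  | 0, a, b => a = b
  | n + 1, a, b => ∃ c, G.dir a c ∧ dchain G n c b

lemma anc_iff_dchain {G : MixedGraph V} {a b : V} : G.anc a b ↔ ∃ n, dchain G n a b := by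
  constructor
  · intro h
    induction h using Relation.ReflTransGen.head_induction_on with
    | refl => exact ⟨0, rfl⟩
    | head hdir _ ih =>
      obtain ⟨n, hn⟩ := ih
      exact ⟨n + 1, _, hdir, hn⟩
  · rintro ⟨n, hn⟩
    induction n generalizing a with
    | zero => exact (show a = b from hn) ▸ Relation.ReflTransGen.refl
    | succ n ih =>
      obtain ⟨c, hdir, hch⟩ := hn
      exact Relation.ReflTransGen.head hdir (ih hch)

include hd hb hInd in
/-- Ancestor relations between non-`x` vertices survive removal of `x`. -/
lemma anc_avoid {a b : V} (h : G.anc a b) (hax : a ≠ x) (hbx : b ≠ x) :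
    (G.induce (G.verts \ {x})).anc a b := by
  obtain ⟨n, hn⟩ := anc_iff_dchain.mp h
  clear h
  induction n using Nat.strong_induction_on generalizing a with
  | _ n ih =>
    match n, hn with
    | 0, hn => exact (show a = b from hn) ▸ Relation.ReflTransGen.refl
    | (n+1), hn =>
      obtain ⟨c, hdir, hch⟩ := hn
      by_cases hcx : c = x
      · rw [hcx] at hdir hch
        match n, hch with
        | 0, hch => exact absurd hch (fun h => hbx h.symm)
        | (m+1), hch =>
          obtain ⟨q, hdq, hchq⟩ := hch
          have hqx : q ≠ x := (anc_ne_of_dir hd hdq).symm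
          have haq : a ≠ q := by
            intro hcon
            subst hcon
            exact dir_asymm hd hdir hdq
          have hdaq : G.dir a q := dir_shortcut hd hb hInd hdir hdq haq
          have hsub : (G.induce (G.verts \ {x})).anc q b := ih m (by omega) hqx hchq
          refine Relation.ReflTransGen.head ?_ hsub
          exact ⟨hdaq, ⟨(G.dir_mem hdaq).1, hax⟩, ⟨(G.dir_mem hdaq).2, hqx⟩⟩
      · have hsub : (G.induce (G.verts \ {x})).anc c b := ih n (by omega) hcx hch
        refine Relation.ReflTransGen.head ?_ hsub
        exact ⟨hdir, ⟨(G.dir_mem hdir).1, hax⟩, ⟨(G.dir_mem hdir).2, hcx⟩⟩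

include hd hb hInd in
lemma An_avoid {v : V} {S : Set V} (hS : ∀ w ∈ S, w ≠ x) (h : v ∈ G.An S)
    (hvx : v ≠ x) : v ∈ (G.induce (G.verts \ {x})).An S := by
  obtain ⟨w, hw, ha⟩ := h
  exact ⟨w, hw, anc_avoid hd hb hInd ha hvx (hS w hw)⟩

end Forcing

end MixedGraph
/-! ### The chain lemma -/

namespace MixedGraph

variable {V : Type*}

section Chain

variable {G : MixedGraph V} {y z x t : V} {Z : Set V}

/-- From a collider segment of an active path ending at `x` with a child `t` of
`x`, build an `x`-inducing connection from `p.vert m` to `t`. -/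
lemma IndCon.of_segment (hd : ∀ a b, G.dir a b → ¬ G.anc b a)
    (p : MPath G y z) {k m : ℕ} (hk0 : 0 < k) (hkl : k < p.len) (hkx : p.vert k = x)
    (hxt : G.dir x t) (hm : m ≤ k - 1) (hmt : p.vert m ≠ t)
    (hI : ∀ i, m < i → i ≤ k - 1 →
      G.dir (p.vert i) t ∧ headAt2 (p.edir (i - 1)) ∧ headAt1 (p.edir i)) :
    IndCon G x (p.vert m) t := by
  have hxe : x ≠ t := anc_ne_of_dir hd hxt
  have htv : t ∈ G.verts := (G.dir_mem hxt).2
  refine ⟨⟨k - m + 1, by omega,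
    (fun j => if j ≤ k - m then p.vert (m + j) else t),
    (fun j => if j < k - m then p.edir (m + j) else EdgeDir.fwd),
    ?_, ?_, ?_, ?_, ?_⟩, ?_⟩
  · simp
  · have h1 : ¬ (k - m + 1 ≤ k - m) := by omega
    simp [h1]
  · intro i hi
    by_cases h : i ≤ k - m
    · simp only [if_pos h]
      exact p.mem (m + i) (by omega)
    · simp only [if_neg h]
      exact htv
  · -- injectivity
    intro i j hi hj hv
    by_cases h1 : i ≤ k - m <;> by_cases h2 : j ≤ k - m
    · simp only [if_pos h1, if_pos h2] at hv
      have := p.inj (m + i) (m + j) (by omega) (by omega) hv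
      omega
    · simp only [if_pos h1, if_neg h2] at hv
      exfalso
      rcases Nat.lt_or_ge 0 i with hi0 | hi0
      · by_cases hik : i = k - m
        · apply hxe
          rw [← hkx, ← hv]
          congr 1
          omega
        · have := (hI (m + i) (by omega) (by omega)).1
          rw [hv] at this
          exact dir_irrefl hd this
      · have : i = 0 := by omega
        rw [this] at hv
        simp only [Nat.add_zero] at hv
        exact hmt hv
    · simp only [if_neg h1, if_pos h2] at hv
      exfalso
      rcases Nat.lt_or_ge 0 j with hj0 | hj0
      · by_cases hjk : j = k - m
        · apply hxe
          rw [← hkx, ← hv.symm]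
          congr 1
          omega
        · have := (hI (m + j) (by omega) (by omega)).1
          rw [← hv] at this
          exact dir_irrefl hd this
      · have : j = 0 := by omega
        rw [this] at hv
        simp only [Nat.add_zero] at hv
        exact hmt hv.symm
    · omega
  · -- validity
    intro i hiL
    by_cases h : i < k - m
    · have e1 : (if i ≤ k - m then p.vert (m + i) else t) = p.vert (m + i) :=
        if_pos (by omega)
      have e2 : (if i + 1 ≤ k - m then p.vert (m + (i + 1)) else t) = p.vert (m + i + 1) := by
        rw [if_pos (by omega)]
        exact congrArg p.vert (by omega)
      simp only [if_pos h, e1, e2]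
      exact p.valid (m + i) (by omega)
    · have hik : i = k - m := by omega
      subst hik
      have e1 : (if k - m ≤ k - m then p.vert (m + (k - m)) else t) = x := by
        rw [if_pos le_rfl, ← hkx]
        congr 1
        omega
      have e2 : (if k - m + 1 ≤ k - m then p.vert (m + (k - m + 1)) else t) = t :=
        if_neg (by omega)
      simp only [if_neg h, e1, e2]
      exact hxt
  · -- goodness
    intro j hj0 hjL
    have hjL' : j ≤ k - m := by
      have : j < k - m + 1 := hjL
      omega
    by_cases h : j < k - m
    · -- interior path collider
      obtain ⟨hdir, hh2, hh1⟩ := hI (m + j) (by omega) (by omega)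
      have e0 : (if j ≤ k - m then p.vert (m + j) else t) = p.vert (m + j) := if_pos hjL'
      have e1 : (if j - 1 < k - m then p.edir (m + (j - 1)) else EdgeDir.fwd)
          = p.edir (m + j - 1) := by
        rw [if_pos (by omega)]
        exact congrArg p.edir (by omega)
      have e2 : (if j < k - m then p.edir (m + j) else EdgeDir.fwd) = p.edir (m + j) :=
        if_pos h
      constructor
      · intro _
        simp only [e0]
        exact ⟨t, Or.inr rfl, Relation.ReflTransGen.single hdir⟩
      · intro hnc
        exfalso
        apply hnc
        constructor
        · show headAt2 (if j - 1 < k - m then p.edir (m + (j - 1)) else EdgeDir.fwd)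
          rw [e1]
          exact hh2
        · show headAt1 (if j < k - m then p.edir (m + j) else EdgeDir.fwd)
          rw [e2]
          exact hh1
    · -- the vertex x
      have hjk : j = k - m := by omega
      subst hjk
      constructor
      · intro hcol
        exfalso
        have h2 : headAt1 (if k - m < k - m then p.edir (m + (k - m)) else EdgeDir.fwd) :=
          hcol.2
        rw [if_neg h] at h2
        rcases h2 with h' | h' <;> cases h'
      · intro _
        have e0 : (if k - m ≤ k - m then p.vert (m + (k - m)) else t) = x := by
          rw [if_pos le_rfl, ← hkx]
          congr 1
          omega
        simp only [e0]
        rfl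

end Chain

end MixedGraph
namespace MixedGraph

variable {V : Type*}

section Chain2

variable {G : MixedGraph V} {y z x t : V} {Z : Set V}

theorem chain_left
    (hd : ∀ a b, G.dir a b → ¬ G.anc b a) (hb : ∀ a b, G.bi a b → ¬ G.anc b a)
    (hInd : ∀ a b, a ∈ G.verts → b ∈ G.verts → a ≠ x → b ≠ x → a ≠ b →
      IndCon G x a b → G.adj a b)
    (p : MPath G y z) (hact : p.Good {v | v ∉ Z} (Z ∪ {y, z}))
    {k : ℕ} (hk0 : 0 < k) (hkl : k < p.len) (hkx : p.vert k = x)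
    (hxt : G.dir x t)
    (hresc : p.edir (k - 1) = .fwd → x ∈ G.An (Z ∪ {y, z})) :
    (∃ m ≤ k - 1, p.vert m = t) ∨
    (∃ m, m ≤ k - 1 ∧ ∃ e, edirValid G (p.vert m) t e ∧ headAt2 e ∧
      (0 < m →
        (headAt2 (p.edir (m - 1)) ∧ headAt1 e → p.vert m ∈ G.An (Z ∪ {y, z})) ∧
        (¬ (headAt2 (p.edir (m - 1)) ∧ headAt1 e) → p.vert m ∉ Z))) ∨
    (p.edir (k - 1) = .bwd ∧ G.dir t (p.vert (k - 1))) := by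
  have hxv : x ∈ G.verts := (G.dir_mem hxt).1
  have htv : t ∈ G.verts := (G.dir_mem hxt).2
  have hxe : x ≠ t := anc_ne_of_dir hd hxt
  suffices h : ∀ m, m ≤ k - 1 →
      (∀ i, m < i → i ≤ k - 1 →
        G.dir (p.vert i) t ∧ headAt2 (p.edir (i - 1)) ∧ headAt1 (p.edir i)) →
      ((∃ m ≤ k - 1, p.vert m = t) ∨
      (∃ m, m ≤ k - 1 ∧ ∃ e, edirValid G (p.vert m) t e ∧ headAt2 e ∧
        (0 < m →
          (headAt2 (p.edir (m - 1)) ∧ headAt1 e → p.vert m ∈ G.An (Z ∪ {y, z})) ∧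
          (¬ (headAt2 (p.edir (m - 1)) ∧ headAt1 e) → p.vert m ∉ Z))) ∨
      (p.edir (k - 1) = .bwd ∧ G.dir t (p.vert (k - 1)))) by
    exact h (k - 1) le_rfl (fun i hi1 hi2 => by omega)
  intro m
  induction m using Nat.strong_induction_on with
  | _ m IH =>
  intro hm hI
  by_cases hmt : p.vert m = t
  · exact Or.inl ⟨m, hm, hmt⟩
  have hcon : IndCon G x (p.vert m) t := IndCon.of_segment hd p hk0 hkl hkx hxt hm hmt hI
  have hmx : p.vert m ≠ x := by
    intro hcon'
    have := p.inj m k (by omega) (by omega) (by rw [hcon', hkx])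
    omega
  have hmv : p.vert m ∈ G.verts := p.mem m (by omega)
  rcases hInd (p.vert m) t hmv htv hmx (Ne.symm hxe) hmt hcon with hdir | hdir | hbi
  · -- vert m → t
    rcases Nat.eq_zero_or_pos m with hm0 | hm0
    · exact Or.inr (Or.inl ⟨m, hm, .fwd, hdir, Or.inl rfl, fun h0 => by omega⟩)
    by_cases hmZ : p.vert m ∈ Z
    · -- p-collider at m ; recurse
      have hcolm : p.collider m := by
        by_contra hnc
        exact ((hact m hm0 (by omega)).2 hnc) hmZ
      refine IH (m - 1) (by omega) (by omega) ?_
      intro i hi1 hi2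
      by_cases him : i = m
      · subst him
        exact ⟨hdir, hcolm.1, hcolm.2⟩
      · exact hI i (by omega) hi2
    · exact Or.inr (Or.inl ⟨m, hm, .fwd, hdir, Or.inl rfl,
        fun _ => ⟨fun hcol => absurd hcol.2 (by simp [headAt1]), fun _ => hmZ⟩⟩)
  · -- t → vert m
    rcases eq_or_lt_of_le hm with hmk | hmk
    · -- m = k - 1
      subst hmk
      have hval : edirValid G (p.vert (k - 1)) x (p.edir (k - 1)) := by
        have h' := p.valid (k - 1) (by omega)
        rw [show k - 1 + 1 = k from by omega, hkx] at h'
        exact h'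
      cases he : p.edir (k - 1) with
      | fwd =>
        rw [he] at hval
        exact absurd (Relation.ReflTransGen.head hdir (Relation.ReflTransGen.single hval))
          (hd x t hxt)
      | bwd => exact Or.inr (Or.inr ⟨rfl, hdir⟩)
      | bidir =>
        rw [he] at hval
        exact absurd (Relation.ReflTransGen.head hxt (Relation.ReflTransGen.single hdir))
          (hb _ _ hval)
    · -- m < k - 1
      obtain ⟨hdir1, hh2, hh1⟩ := hI (m + 1) (by omega) (by omega)
      have hh2' : headAt2 (p.edir m) := by
        rw [show m + 1 - 1 = m from by omega] at hh2
        exact hh2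
      have hval : edirValid G (p.vert m) (p.vert (m + 1)) (p.edir m) := p.valid m (by omega)
      rcases hh2' with hf | hf
      · rw [hf] at hval
        exact absurd (Relation.ReflTransGen.head hdir (Relation.ReflTransGen.single hval))
          (hd (p.vert (m + 1)) t hdir1)
      · rw [hf] at hval
        exact absurd (Relation.ReflTransGen.head hdir1 (Relation.ReflTransGen.single hdir))
          (hb _ _ hval)
  · -- vert m ↔ t
    refine Or.inr (Or.inl ⟨m, hm, .bidir, hbi, Or.inr rfl, fun hm0 => ⟨?_, ?_⟩⟩)
    · rintro ⟨hL, -⟩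
      by_cases hcolm : headAt1 (p.edir m)
      · exact (hact m hm0 (by omega)).1 ⟨hL, hcolm⟩
      · have hf : p.edir m = .fwd := MWalk.edir_eq_fwd_of_not_headAt1 hcolm
        have hval : G.dir (p.vert m) (p.vert (m + 1)) := by
          have h' := p.valid m (by omega)
          rw [hf] at h'
          exact h'
        rcases eq_or_lt_of_le hm with hmk | hmk
        · -- m = k - 1 : use the rescue hypothesis
          have hx' : x ∈ G.An (Z ∪ {y, z}) := hresc (by rw [← hmk]; exact hf)
          have hvx : p.vert (m + 1) = x := by
            rw [show m + 1 = k from by omega, hkx]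
          rw [hvx] at hval
          exact An_trans (Relation.ReflTransGen.single hval) hx'
        · -- m + 1 is an invariant collider
          obtain ⟨hdir1, hh2, hh1⟩ := hI (m + 1) (by omega) (by omega)
          have hcol1 : p.vert (m + 1) ∈ G.An (Z ∪ {y, z}) :=
            (hact (m + 1) (by omega) (by omega)).1 ⟨hh2, hh1⟩
          exact An_trans (Relation.ReflTransGen.single hval) hcol1
    · intro hnc
      have hnm : ¬ p.collider m := by
        intro hcol
        exact hnc ⟨hcol.1, Or.inr rfl⟩
      exact (hact m hm0 (by omega)).2 hnm

end Chain2

end MixedGraph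
/-! ### Path reversal and the right chain lemma -/

def EdgeDir.flip : EdgeDir → EdgeDir
  | .fwd => .bwd
  | .bwd => .fwd
  | .bidir => .bidir

lemma headAt1_flip {e : EdgeDir} : headAt1 e.flip ↔ headAt2 e := by
  cases e <;> simp [EdgeDir.flip, headAt1, headAt2]

lemma headAt2_flip {e : EdgeDir} : headAt2 e.flip ↔ headAt1 e := by
  cases e <;> simp [EdgeDir.flip, headAt1, headAt2]

lemma flip_eq_fwd {e : EdgeDir} : e.flip = .fwd ↔ e = .bwd := by
  cases e <;> simp [EdgeDir.flip]

lemma flip_eq_bwd {e : EdgeDir} : e.flip = .bwd ↔ e = .fwd := by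
  cases e <;> simp [EdgeDir.flip]

lemma edirValid_flip {V : Type*} {G : MixedGraph V} {a b : V} {e : EdgeDir}
    (h : edirValid G a b e) : edirValid G b a e.flip := by
  cases e with
  | fwd => exact h
  | bwd => exact h
  | bidir => exact G.bi_symm h

def MPath.reverse {V : Type*} {G : MixedGraph V} {y z : V} (p : MPath G y z) :
    MPath G z y where
  len := p.len
  len_pos := p.len_pos
  vert i := p.vert (p.len - i)
  edir i := (p.edir (p.len - 1 - i)).flip
  first := by
    show p.vert (p.len - 0) = z
    rw [Nat.sub_zero, p.last]
  last := by
    show p.vert (p.len - p.len) = y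
    rw [Nat.sub_self, p.first]
  mem := fun i _ => p.mem _ (by omega)
  inj := by
    intro i j hi hj hv
    have := p.inj _ _ (by omega) (by omega) hv
    omega
  valid := by
    intro i hi
    have h := p.valid (p.len - 1 - i) (by omega)
    have h2 : p.len - 1 - i + 1 = p.len - i := by omega
    rw [h2] at h
    show edirValid G (p.vert (p.len - i)) (p.vert (p.len - (i + 1)))
      ((p.edir (p.len - 1 - i)).flip)
    rw [show p.len - (i + 1) = p.len - 1 - i from by omega]
    exact edirValid_flip h

namespace MPath

variable {V : Type*} {G : MixedGraph V} {y z : V}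

lemma reverse_len (p : MPath G y z) : p.reverse.len = p.len := rfl

lemma reverse_vert (p : MPath G y z) (i : ℕ) : p.reverse.vert i = p.vert (p.len - i) := rfl

lemma reverse_edir (p : MPath G y z) (i : ℕ) :
    p.reverse.edir i = (p.edir (p.len - 1 - i)).flip := rfl

lemma reverse_collider (p : MPath G y z) {i : ℕ} (hi0 : 0 < i) (hil : i < p.len) :
    (p.reverse.collider i ↔ p.collider (p.len - i)) := by
  unfold collider
  rw [reverse_edir, reverse_edir]
  rw [show p.len - 1 - (i - 1) = p.len - i from by omega,
      show p.len - 1 - i = p.len - i - 1 from by omega]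
  rw [headAt2_flip, headAt1_flip]
  exact and_comm

lemma reverse_good {p : MPath G y z} {N S : Set V} (h : p.Good N S) :
    p.reverse.Good N S := by
  intro i hi0 hil
  have hil' : i < p.len := hil
  have h1 := h (p.len - i) (by omega) (by omega)
  rw [reverse_vert]
  constructor
  · intro hc
    exact h1.1 ((p.reverse_collider hi0 hil').mp hc)
  · intro hc
    exact h1.2 (fun h' => hc ((p.reverse_collider hi0 hil').mpr h'))

end MPath

namespace MixedGraph

variable {V : Type*} {G : MixedGraph V} {y z x t : V} {Z : Set V}

theorem chain_right
    (hd : ∀ a b, G.dir a b → ¬ G.anc b a) (hb : ∀ a b, G.bi a b → ¬ G.anc b a)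
    (hInd : ∀ a b, a ∈ G.verts → b ∈ G.verts → a ≠ x → b ≠ x → a ≠ b →
      IndCon G x a b → G.adj a b)
    (p : MPath G y z) (hact : p.Good {v | v ∉ Z} (Z ∪ {y, z}))
    {k : ℕ} (hk0 : 0 < k) (hkl : k < p.len) (hkx : p.vert k = x)
    (hxt : G.dir x t)
    (hresc : p.edir k = .bwd → x ∈ G.An (Z ∪ {y, z})) :
    (∃ m, k + 1 ≤ m ∧ m ≤ p.len ∧ p.vert m = t) ∨
    (∃ m, k + 1 ≤ m ∧ m ≤ p.len ∧ ∃ e, edirValid G (p.vert m) t e ∧ headAt2 e ∧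
      (m < p.len →
        (headAt1 (p.edir m) ∧ headAt1 e → p.vert m ∈ G.An (Z ∪ {y, z})) ∧
        (¬ (headAt1 (p.edir m) ∧ headAt1 e) → p.vert m ∉ Z))) ∨
    (p.edir k = .fwd ∧ G.dir t (p.vert (k + 1))) := by
  have hSzy : (Z ∪ {z, y} : Set V) = Z ∪ {y, z} := by
    rw [Set.pair_comm]
  have hact' : p.reverse.Good {v | v ∉ Z} (Z ∪ {z, y}) := by
    rw [hSzy]
    exact p.reverse_good hact
  have hk0' : 0 < p.len - k := by omega
  have hkl' : p.len - k < p.reverse.len := by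
    rw [p.reverse_len]; omega
  have hkx' : p.reverse.vert (p.len - k) = x := by
    rw [p.reverse_vert, show p.len - (p.len - k) = k from by omega, hkx]
  have hresc' : p.reverse.edir (p.len - k - 1) = .fwd → x ∈ G.An (Z ∪ {z, y}) := by
    intro h
    rw [p.reverse_edir, show p.len - 1 - (p.len - k - 1) = k from by omega,
      flip_eq_fwd] at h
    rw [hSzy]
    exact hresc h
  have hmain := chain_left hd hb hInd p.reverse hact' hk0' hkl' hkx' hxt hresc'
  rw [hSzy] at hmain
  rcases hmain with ⟨m', hm', hv'⟩ | ⟨m', hm', e, hval, hh2, hjunc⟩ | ⟨hsw1, hsw2⟩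
  · left
    refine ⟨p.len - m', by omega, by omega, ?_⟩
    rw [p.reverse_vert] at hv'
    exact hv'
  · right; left
    refine ⟨p.len - m', by omega, by omega, e, ?_, hh2, ?_⟩
    · rw [p.reverse_vert] at hval
      exact hval
    · intro hmlen
      have hm'0 : 0 < m' := by omega
      obtain ⟨j1, j2⟩ := hjunc hm'0
      rw [p.reverse_edir, show p.len - 1 - (m' - 1) = p.len - m' from by omega,
        p.reverse_vert] at j1
      rw [p.reverse_edir, show p.len - 1 - (m' - 1) = p.len - m' from by omega,
        p.reverse_vert] at j2
      constructor
      · rintro ⟨ha, hbb⟩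
        exact j1 ⟨headAt2_flip.mpr ha, hbb⟩
      · intro hn
        apply j2
        rintro ⟨ha, hbb⟩
        exact hn ⟨headAt2_flip.mp ha, hbb⟩
  · right; right
    rw [p.reverse_edir, show p.len - 1 - (p.len - k - 1) = k from by omega,
      flip_eq_bwd] at hsw1
    rw [p.reverse_vert, show p.len - (p.len - k - 1) = k + 1 from by omega] at hsw2
    exact ⟨hsw1, hsw2⟩

end MixedGraph
/-! ### Stitching new walks from path pieces -/

namespace MixedGraph

variable {V : Type*} {G : MixedGraph V} {y z : V}

/-- The walk obtained from `p` by replacing the segment between `a < b` by an edge `f`. -/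
def stitchWalk (p : MPath G y z) (a b : ℕ) (f : EdgeDir) (hab : a < b) (hbl : b ≤ p.len)
    (hval : edirValid G (p.vert a) (p.vert b) f) : MWalk G y z where
  len := a + 1 + (p.len - b)
  vert j := if j ≤ a then p.vert j else p.vert (j + b - a - 1)
  edir j := if j < a then p.edir j else if j = a then f else p.edir (j + b - a - 1)
  first := by
    show (if 0 ≤ a then p.vert 0 else _) = y
    rw [if_pos (Nat.zero_le a), p.first]
  last := by
    show (if a + 1 + (p.len - b) ≤ a then _ else p.vert (a + 1 + (p.len - b) + b - a - 1)) = z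
    rw [if_neg (by omega : ¬ (a + 1 + (p.len - b) ≤ a)),
      show a + 1 + (p.len - b) + b - a - 1 = p.len from by omega, p.last]
  mem := by
    intro i hi
    show (if i ≤ a then p.vert i else p.vert (i + b - a - 1)) ∈ G.verts
    by_cases h : i ≤ a
    · rw [if_pos h]; exact p.mem i (by omega)
    · rw [if_neg h]; exact p.mem _ (by omega)
  valid := by
    intro i hi
    show edirValid G (if i ≤ a then p.vert i else p.vert (i + b - a - 1))
      (if i + 1 ≤ a then p.vert (i + 1) else p.vert (i + 1 + b - a - 1))
      (if i < a then p.edir i else if i = a then f else p.edir (i + b - a - 1))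
    rcases lt_trichotomy i a with h | h | h
    · rw [if_pos (le_of_lt h), if_pos (by omega : i + 1 ≤ a), if_pos h]
      exact p.valid i (by omega)
    · subst h
      rw [if_pos (le_refl i), if_neg (by omega : ¬ (i + 1 ≤ i)), if_neg (lt_irrefl i),
        if_pos rfl, show i + 1 + b - i - 1 = b from by omega]
      exact hval
    · rw [if_neg (by omega : ¬ (i ≤ a)), if_neg (by omega : ¬ (i + 1 ≤ a)),
        if_neg (by omega : ¬ (i < a)), if_neg (by omega : ¬ (i = a)),
        show i + 1 + b - a - 1 = i + b - a - 1 + 1 from by omega]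
      have hilen : i + b - a - 1 < p.len := by
        have : i < a + 1 + (p.len - b) := hi
        omega
      exact p.valid _ hilen

lemma stitchWalk_len (p : MPath G y z) (a b : ℕ) (f : EdgeDir) (hab : a < b)
    (hbl : b ≤ p.len) (hval : edirValid G (p.vert a) (p.vert b) f) :
    (stitchWalk p a b f hab hbl hval).len = a + 1 + (p.len - b) := rfl

lemma stitchWalk_vert (p : MPath G y z) (a b : ℕ) (f : EdgeDir) (hab : a < b)
    (hbl : b ≤ p.len) (hval : edirValid G (p.vert a) (p.vert b) f) (j : ℕ) :
    (stitchWalk p a b f hab hbl hval).vert j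
      = if j ≤ a then p.vert j else p.vert (j + b - a - 1) := rfl

lemma stitchWalk_edir (p : MPath G y z) (a b : ℕ) (f : EdgeDir) (hab : a < b)
    (hbl : b ≤ p.len) (hval : edirValid G (p.vert a) (p.vert b) f) (j : ℕ) :
    (stitchWalk p a b f hab hbl hval).edir j
      = if j < a then p.edir j else if j = a then f else p.edir (j + b - a - 1) := rfl

lemma stitchWalk_good (p : MPath G y z) {N S : Set V} (hact : p.Good N S)
    {a b : ℕ} {f : EdgeDir} (hab : a < b) (hbl : b ≤ p.len)
    (hval : edirValid G (p.vert a) (p.vert b) f)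
    (hga : 0 < a → (headAt2 (p.edir (a - 1)) ∧ headAt1 f → p.vert a ∈ G.An S) ∧
      (¬ (headAt2 (p.edir (a - 1)) ∧ headAt1 f) → p.vert a ∈ N))
    (hgb : b < p.len → (headAt2 f ∧ headAt1 (p.edir b) → p.vert b ∈ G.An S) ∧
      (¬ (headAt2 f ∧ headAt1 (p.edir b)) → p.vert b ∈ N)) :
    (stitchWalk p a b f hab hbl hval).Good N S := by
  intro j hj0 hjlen
  have hjlen' : j < a + 1 + (p.len - b) := hjlen
  have hcol : (stitchWalk p a b f hab hbl hval).collider j ↔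
      (headAt2 (if j - 1 < a then p.edir (j - 1) else if j - 1 = a then f
        else p.edir (j - 1 + b - a - 1)) ∧
       headAt1 (if j < a then p.edir j else if j = a then f
        else p.edir (j + b - a - 1))) := by
    unfold MWalk.collider
    rw [stitchWalk_edir, stitchWalk_edir]
  rw [stitchWalk_vert]
  rcases lt_trichotomy j a with h | h | h
  · rw [if_pos (le_of_lt h)]
    have e1 : (if j - 1 < a then p.edir (j - 1) else if j - 1 = a then f
        else p.edir (j - 1 + b - a - 1)) = p.edir (j - 1) := if_pos (by omega)
    have e2 : (if j < a then p.edir j else if j = a then f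
        else p.edir (j + b - a - 1)) = p.edir j := if_pos h
    rw [e1, e2] at hcol
    constructor
    · intro hc
      exact (hact j hj0 (by omega)).1 (hcol.mp hc)
    · intro hc
      exact (hact j hj0 (by omega)).2 (fun h' => hc (hcol.mpr h'))
  · subst h
    rw [if_pos le_rfl]
    have e1 : (if j - 1 < j then p.edir (j - 1) else if j - 1 = j then f
        else p.edir (j - 1 + b - j - 1)) = p.edir (j - 1) := if_pos (by omega)
    have e2 : (if j < j then p.edir j else if j = j then f
        else p.edir (j + b - j - 1)) = f := by
      rw [if_neg (lt_irrefl j), if_pos rfl]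
    rw [e1, e2] at hcol
    obtain ⟨g1, g2⟩ := hga hj0
    exact ⟨fun hc => g1 (hcol.mp hc), fun hc => g2 (fun h' => hc (hcol.mpr h'))⟩
  · rw [if_neg (by omega : ¬ (j ≤ a))]
    have e2 : (if j < a then p.edir j else if j = a then f
        else p.edir (j + b - a - 1)) = p.edir (j + b - a - 1) := by
      rw [if_neg (by omega : ¬ (j < a)), if_neg (by omega : ¬ (j = a))]
    by_cases hja : j = a + 1
    · have hbv : j + b - a - 1 = b := by omega
      have hblen : b < p.len := by omega
      have e1 : (if j - 1 < a then p.edir (j - 1) else if j - 1 = a then f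
          else p.edir (j - 1 + b - a - 1)) = f := by
        rw [if_neg (by omega : ¬ (j - 1 < a)), if_pos (by omega : j - 1 = a)]
      rw [e1, e2, hbv] at hcol
      rw [hbv]
      obtain ⟨g1, g2⟩ := hgb hblen
      exact ⟨fun hc => g1 (hcol.mp hc), fun hc => g2 (fun h' => hc (hcol.mpr h'))⟩
    · have e1 : (if j - 1 < a then p.edir (j - 1) else if j - 1 = a then f
          else p.edir (j - 1 + b - a - 1)) = p.edir (j + b - a - 1 - 1) := by
        rw [if_neg (by omega : ¬ (j - 1 < a)), if_neg (by omega : ¬ (j - 1 = a)),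
          show j - 1 + b - a - 1 = j + b - a - 1 - 1 from by omega]
      rw [e1, e2] at hcol
      have hint : 0 < j + b - a - 1 ∧ j + b - a - 1 < p.len := by omega
      exact ⟨fun hc => (hact _ hint.1 hint.2).1 (hcol.mp hc),
        fun hc => (hact _ hint.1 hint.2).2 (fun h' => hc (hcol.mpr h'))⟩

lemma stitchWalk_verts (p : MPath G y z) (a b : ℕ) (f : EdgeDir) (hab : a < b)
    (hbl : b ≤ p.len) (hval : edirValid G (p.vert a) (p.vert b) f) :
    ∀ j ≤ (stitchWalk p a b f hab hbl hval).len,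
      ∃ i, i ≤ p.len ∧ (i ≤ a ∨ b ≤ i) ∧
        (stitchWalk p a b f hab hbl hval).vert j = p.vert i := by
  intro j hj
  have hj' : j ≤ a + 1 + (p.len - b) := hj
  rw [stitchWalk_vert]
  by_cases h : j ≤ a
  · exact ⟨j, by omega, Or.inl h, if_pos h⟩
  · exact ⟨j + b - a - 1, by omega, Or.inr (by omega), if_neg h⟩

end MixedGraph
namespace MixedGraph

variable {V : Type*} {G : MixedGraph V} {y z : V}

/-- The walk obtained from `p` by replacing the segment between `a < b` by two
edges through a vertex `d`. -/
def stitch2Walk (p : MPath G y z) (a b : ℕ) (d : V) (f1 f2 : EdgeDir)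
    (hab : a < b) (hbl : b ≤ p.len) (hdv : d ∈ G.verts)
    (hv1 : edirValid G (p.vert a) d f1) (hv2 : edirValid G d (p.vert b) f2) :
    MWalk G y z where
  len := a + 2 + (p.len - b)
  vert j := if j ≤ a then p.vert j else if j = a + 1 then d else p.vert (j + b - a - 2)
  edir j := if j < a then p.edir j else if j = a then f1 else if j = a + 1 then f2
    else p.edir (j + b - a - 2)
  first := by
    show (if 0 ≤ a then p.vert 0 else _) = y
    rw [if_pos (Nat.zero_le a), p.first]
  last := by
    show (if a + 2 + (p.len - b) ≤ a then _ else if a + 2 + (p.len - b) = a + 1 then d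
      else p.vert (a + 2 + (p.len - b) + b - a - 2)) = z
    rw [if_neg (by omega : ¬ (a + 2 + (p.len - b) ≤ a)),
      if_neg (by omega : ¬ (a + 2 + (p.len - b) = a + 1)),
      show a + 2 + (p.len - b) + b - a - 2 = p.len from by omega, p.last]
  mem := by
    intro i hi
    show (if i ≤ a then p.vert i else if i = a + 1 then d
      else p.vert (i + b - a - 2)) ∈ G.verts
    by_cases h : i ≤ a
    · rw [if_pos h]; exact p.mem i (by omega)
    · rw [if_neg h]
      by_cases h2 : i = a + 1
      · rw [if_pos h2]; exact hdv
      · rw [if_neg h2]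
        have : i ≤ a + 2 + (p.len - b) := hi
        exact p.mem _ (by omega)
  valid := by
    intro i hi
    have hi' : i < a + 2 + (p.len - b) := hi
    show edirValid G
      (if i ≤ a then p.vert i else if i = a + 1 then d else p.vert (i + b - a - 2))
      (if i + 1 ≤ a then p.vert (i + 1) else if i + 1 = a + 1 then d
        else p.vert (i + 1 + b - a - 2))
      (if i < a then p.edir i else if i = a then f1 else if i = a + 1 then f2
        else p.edir (i + b - a - 2))
    rcases lt_trichotomy i a with h | h | h
    · rw [if_pos (le_of_lt h), if_pos (by omega : i + 1 ≤ a), if_pos h]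
      exact p.valid i (by omega)
    · subst h
      rw [if_pos (le_refl i), if_neg (by omega : ¬ (i + 1 ≤ i)),
        if_pos (rfl : i + 1 = i + 1), if_neg (lt_irrefl i), if_pos rfl]
      exact hv1
    · rw [if_neg (by omega : ¬ (i ≤ a)), if_neg (by omega : ¬ (i < a)),
        if_neg (by omega : ¬ (i = a)), if_neg (by omega : ¬ (i + 1 ≤ a))]
      by_cases h2 : i = a + 1
      · rw [if_pos h2, if_neg (by omega : ¬ (i + 1 = a + 1)), if_pos h2,
          show i + 1 + b - a - 2 = b from by omega]
        exact hv2
      · rw [if_neg h2, if_neg (by omega : ¬ (i + 1 = a + 1)), if_neg h2,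
          show i + 1 + b - a - 2 = i + b - a - 2 + 1 from by omega]
        exact p.valid _ (by omega)

lemma stitch2Walk_len (p : MPath G y z) (a b : ℕ) (d : V) (f1 f2 : EdgeDir)
    (hab : a < b) (hbl : b ≤ p.len) (hdv : d ∈ G.verts)
    (hv1 : edirValid G (p.vert a) d f1) (hv2 : edirValid G d (p.vert b) f2) :
    (stitch2Walk p a b d f1 f2 hab hbl hdv hv1 hv2).len = a + 2 + (p.len - b) := rfl

lemma stitch2Walk_vert (p : MPath G y z) (a b : ℕ) (d : V) (f1 f2 : EdgeDir)
    (hab : a < b) (hbl : b ≤ p.len) (hdv : d ∈ G.verts)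
    (hv1 : edirValid G (p.vert a) d f1) (hv2 : edirValid G d (p.vert b) f2) (j : ℕ) :
    (stitch2Walk p a b d f1 f2 hab hbl hdv hv1 hv2).vert j
      = if j ≤ a then p.vert j else if j = a + 1 then d else p.vert (j + b - a - 2) := rfl

lemma stitch2Walk_edir (p : MPath G y z) (a b : ℕ) (d : V) (f1 f2 : EdgeDir)
    (hab : a < b) (hbl : b ≤ p.len) (hdv : d ∈ G.verts)
    (hv1 : edirValid G (p.vert a) d f1) (hv2 : edirValid G d (p.vert b) f2) (j : ℕ) :
    (stitch2Walk p a b d f1 f2 hab hbl hdv hv1 hv2).edir j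
      = if j < a then p.edir j else if j = a then f1 else if j = a + 1 then f2
        else p.edir (j + b - a - 2) := rfl

lemma stitch2Walk_good (p : MPath G y z) {N S : Set V} (hact : p.Good N S)
    {a b : ℕ} {d : V} {f1 f2 : EdgeDir} (hab : a < b) (hbl : b ≤ p.len)
    (hdv : d ∈ G.verts)
    (hv1 : edirValid G (p.vert a) d f1) (hv2 : edirValid G d (p.vert b) f2)
    (hga : 0 < a → (headAt2 (p.edir (a - 1)) ∧ headAt1 f1 → p.vert a ∈ G.An S) ∧
      (¬ (headAt2 (p.edir (a - 1)) ∧ headAt1 f1) → p.vert a ∈ N))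
    (hgd : (headAt2 f1 ∧ headAt1 f2 → d ∈ G.An S) ∧
      (¬ (headAt2 f1 ∧ headAt1 f2) → d ∈ N))
    (hgb : b < p.len → (headAt2 f2 ∧ headAt1 (p.edir b) → p.vert b ∈ G.An S) ∧
      (¬ (headAt2 f2 ∧ headAt1 (p.edir b)) → p.vert b ∈ N)) :
    (stitch2Walk p a b d f1 f2 hab hbl hdv hv1 hv2).Good N S := by
  intro j hj0 hjlen
  have hjlen' : j < a + 2 + (p.len - b) := hjlen
  have hcol : (stitch2Walk p a b d f1 f2 hab hbl hdv hv1 hv2).collider j ↔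
      (headAt2 (if j - 1 < a then p.edir (j - 1) else if j - 1 = a then f1
        else if j - 1 = a + 1 then f2 else p.edir (j - 1 + b - a - 2)) ∧
       headAt1 (if j < a then p.edir j else if j = a then f1 else if j = a + 1 then f2
        else p.edir (j + b - a - 2))) := by
    unfold MWalk.collider
    rw [stitch2Walk_edir, stitch2Walk_edir]
  rw [stitch2Walk_vert]
  rcases lt_trichotomy j a with h | h | h
  · rw [if_pos (le_of_lt h)]
    rw [if_pos (by omega : j - 1 < a), if_pos h] at hcol
    exact ⟨fun hc => (hact j hj0 (by omega)).1 (hcol.mp hc),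
      fun hc => (hact j hj0 (by omega)).2 (fun h' => hc (hcol.mpr h'))⟩
  · subst h
    rw [if_pos le_rfl]
    rw [if_pos (by omega : j - 1 < j), if_neg (lt_irrefl j), if_pos rfl] at hcol
    obtain ⟨g1, g2⟩ := hga hj0
    exact ⟨fun hc => g1 (hcol.mp hc), fun hc => g2 (fun h' => hc (hcol.mpr h'))⟩
  · rw [if_neg (by omega : ¬ (j ≤ a))]
    by_cases h2 : j = a + 1
    · rw [if_pos h2]
      rw [if_neg (by omega : ¬ (j - 1 < a)), if_pos (by omega : j - 1 = a),
        if_neg (by omega : ¬ (j < a)), if_neg (by omega : ¬ (j = a)), if_pos h2] at hcol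
      exact ⟨fun hc => hgd.1 (hcol.mp hc), fun hc => hgd.2 (fun h' => hc (hcol.mpr h'))⟩
    · rw [if_neg h2]
      rw [if_neg (by omega : ¬ (j - 1 < a)), if_neg (by omega : ¬ (j - 1 = a)),
        if_neg (by omega : ¬ (j < a)), if_neg (by omega : ¬ (j = a)), if_neg h2] at hcol
      by_cases h3 : j = a + 2
      · have hbv : j + b - a - 2 = b := by omega
        have hblen : b < p.len := by omega
        rw [if_pos (by omega : j - 1 = a + 1), hbv] at hcol
        rw [hbv]
        obtain ⟨g1, g2⟩ := hgb hblen
        exact ⟨fun hc => g1 (hcol.mp hc), fun hc => g2 (fun h' => hc (hcol.mpr h'))⟩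
      · rw [if_neg (by omega : ¬ (j - 1 = a + 1)),
          show j - 1 + b - a - 2 = j + b - a - 2 - 1 from by omega] at hcol
        have hint : 0 < j + b - a - 2 ∧ j + b - a - 2 < p.len := by omega
        exact ⟨fun hc => (hact _ hint.1 hint.2).1 (hcol.mp hc),
          fun hc => (hact _ hint.1 hint.2).2 (fun h' => hc (hcol.mpr h'))⟩

lemma stitch2Walk_verts (p : MPath G y z) (a b : ℕ) (d : V) (f1 f2 : EdgeDir)
    (hab : a < b) (hbl : b ≤ p.len) (hdv : d ∈ G.verts)
    (hv1 : edirValid G (p.vert a) d f1) (hv2 : edirValid G d (p.vert b) f2) :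
    ∀ j ≤ (stitch2Walk p a b d f1 f2 hab hbl hdv hv1 hv2).len,
      (stitch2Walk p a b d f1 f2 hab hbl hdv hv1 hv2).vert j = d ∨
      ∃ i, i ≤ p.len ∧ (i ≤ a ∨ b ≤ i) ∧
        (stitch2Walk p a b d f1 f2 hab hbl hdv hv1 hv2).vert j = p.vert i := by
  intro j hj
  have hj' : j ≤ a + 2 + (p.len - b) := hj
  rw [stitch2Walk_vert]
  by_cases h : j ≤ a
  · exact Or.inr ⟨j, by omega, Or.inl h, if_pos h⟩
  · by_cases h2 : j = a + 1
    · left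
      rw [if_neg h, if_pos h2]
    · refine Or.inr ⟨j + b - a - 2, by omega, Or.inr (by omega), ?_⟩
      rw [if_neg h, if_neg h2]

end MixedGraph
namespace MixedGraph

variable {V : Type*} {G : MixedGraph V} {x y z : V} {Z : Set V}

lemma edirValid_induce {Wset : Set V} {a b : V} {e : EdgeDir} (h : edirValid G a b e)
    (ha : a ∈ Wset) (hb : b ∈ Wset) : edirValid (G.induce Wset) a b e := by
  cases e with
  | fwd => exact ⟨h, ha, hb⟩
  | bwd => exact ⟨h, hb, ha⟩
  | bidir => exact ⟨h, ha, hb⟩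

lemma walk_descend
    (hd : ∀ a b, G.dir a b → ¬ G.anc b a) (hb : ∀ a b, G.bi a b → ¬ G.anc b a)
    (hInd : ∀ a b, a ∈ G.verts → b ∈ G.verts → a ≠ x → b ≠ x → a ≠ b →
      IndCon G x a b → G.adj a b)
    (hyz : y ≠ z) (hxZ : x ∉ Z) (hxy : x ≠ y) (hxz : x ≠ z)
    (W : MWalk G y z) (hg : W.Good {v | v ∉ Z} (Z ∪ {y, z}))
    (havoid : ∀ j ≤ W.len, W.vert j ≠ x) :
    ¬ mSep (G.induce (G.verts \ {x})) y z Z := by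
  have hSx : ∀ w ∈ (Z ∪ {y, z} : Set V), w ≠ x := by
    intro w hw hcon
    subst hcon
    rcases hw with h | h | h
    · exact hxZ h
    · exact hxy h
    · exact hxz h
  refine not_mSep_of_walk hyz ⟨W.len, W.vert, W.edir, W.first, W.last, ?_, ?_⟩ ?_
  · intro i hi
    exact ⟨W.mem i hi, W.mem i hi, havoid i hi⟩
  · intro i hi
    exact edirValid_induce (W.valid i hi)
      ⟨W.mem i (by omega), havoid i (by omega)⟩
      ⟨W.mem (i + 1) (by omega), havoid (i + 1) (by omega)⟩
  · intro j h0 hlen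
    have hlen' : j < W.len := hlen
    obtain ⟨h1, h2⟩ := hg j h0 hlen'
    constructor
    · intro hc
      exact An_avoid hd hb hInd hSx (h1 hc) (havoid j (le_of_lt hlen'))
    · exact h2

end MixedGraph
namespace MixedGraph

variable {V : Type*} {G : MixedGraph V} {x y z : V} {Z : Set V}

section Core

variable (hd : ∀ a b, G.dir a b → ¬ G.anc b a) (hb : ∀ a b, G.bi a b → ¬ G.anc b a)
variable (hInd : ∀ a b, a ∈ G.verts → b ∈ G.verts → a ≠ x → b ≠ x → a ≠ b →
    IndCon G x a b → G.adj a b)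
variable (hyz : y ≠ z) (hxZ : x ∉ Z) (hxy : x ≠ y) (hxz : x ≠ z)

include hd hb hInd hyz hxZ hxy hxz in
lemma finish1 (p : MPath G y z) (hp : p.Good {v | v ∉ Z} (Z ∪ {y, z}))
    {k : ℕ} (hk0 : 0 < k) (hkl : k < p.len) (hkx : p.vert k = x)
    {a b : ℕ} {f : EdgeDir} (hak : a ≤ k - 1) (hkb : k + 1 ≤ b)
    (hab : a < b) (hbl : b ≤ p.len)
    (hval : edirValid G (p.vert a) (p.vert b) f)
    (hga : 0 < a → (headAt2 (p.edir (a - 1)) ∧ headAt1 f → p.vert a ∈ G.An (Z ∪ {y, z})) ∧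
      (¬ (headAt2 (p.edir (a - 1)) ∧ headAt1 f) → p.vert a ∈ {v | v ∉ Z}))
    (hgb : b < p.len → (headAt2 f ∧ headAt1 (p.edir b) → p.vert b ∈ G.An (Z ∪ {y, z})) ∧
      (¬ (headAt2 f ∧ headAt1 (p.edir b)) → p.vert b ∈ {v | v ∉ Z})) :
    ¬ mSep (G.induce (G.verts \ {x})) y z Z := by
  have hWg := stitchWalk_good p hp hab hbl hval hga hgb
  have htrack := stitchWalk_verts p a b f hab hbl hval
  refine walk_descend hd hb hInd hyz hxZ hxy hxz _ hWg ?_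
  intro j hj hcon
  obtain ⟨i, hi, hior, hvi⟩ := htrack j hj
  rw [hvi] at hcon
  have := p.inj i k (by omega) (by omega) (by rw [hcon, hkx])
  omega

include hd hb hInd hyz hxZ hxy hxz in
lemma finish2 (p : MPath G y z) (hp : p.Good {v | v ∉ Z} (Z ∪ {y, z}))
    {k : ℕ} (hk0 : 0 < k) (hkl : k < p.len) (hkx : p.vert k = x)
    {a b : ℕ} {d : V} {f1 f2 : EdgeDir} (hak : a ≤ k - 1) (hkb : k + 1 ≤ b)
    (hab : a < b) (hbl : b ≤ p.len) (hdv : d ∈ G.verts) (hdx : d ≠ x)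
    (hv1 : edirValid G (p.vert a) d f1) (hv2 : edirValid G d (p.vert b) f2)
    (hga : 0 < a → (headAt2 (p.edir (a - 1)) ∧ headAt1 f1 → p.vert a ∈ G.An (Z ∪ {y, z})) ∧
      (¬ (headAt2 (p.edir (a - 1)) ∧ headAt1 f1) → p.vert a ∈ {v | v ∉ Z}))
    (hgd : (headAt2 f1 ∧ headAt1 f2 → d ∈ G.An (Z ∪ {y, z})) ∧
      (¬ (headAt2 f1 ∧ headAt1 f2) → d ∈ {v | v ∉ Z}))
    (hgb : b < p.len → (headAt2 f2 ∧ headAt1 (p.edir b) → p.vert b ∈ G.An (Z ∪ {y, z})) ∧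
      (¬ (headAt2 f2 ∧ headAt1 (p.edir b)) → p.vert b ∈ {v | v ∉ Z})) :
    ¬ mSep (G.induce (G.verts \ {x})) y z Z := by
  have hWg := stitch2Walk_good p hp hab hbl hdv hv1 hv2 hga hgd hgb
  have htrack := stitch2Walk_verts p a b d f1 f2 hab hbl hdv hv1 hv2
  refine walk_descend hd hb hInd hyz hxZ hxy hxz _ hWg ?_
  intro j hj hcon
  rcases htrack j hj with hD | ⟨i, hi, hior, hvi⟩
  · rw [hD] at hcon
    exact hdx hcon
  · rw [hvi] at hcon
    have := p.inj i k (by omega) (by omega) (by rw [hcon, hkx])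
    omega

end Core

end MixedGraph
namespace MixedGraph

variable {V : Type*} {G : MixedGraph V} {x y z : V} {Z : Set V}

theorem core_step
    (hd : ∀ a b, G.dir a b → ¬ G.anc b a) (hb : ∀ a b, G.bi a b → ¬ G.anc b a)
    (hInd : ∀ a b, a ∈ G.verts → b ∈ G.verts → a ≠ x → b ≠ x → a ≠ b →
      IndCon G x a b → G.adj a b)
    (hyz : y ≠ z) (hxZ : x ∉ Z) (hxy : x ≠ y) (hxz : x ≠ z)
    (hcon : ¬ mSep G y z Z) :
    ¬ mSep (G.induce (G.verts \ {x})) y z Z := by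
  rw [not_mSep_iff_good] at hcon
  obtain ⟨p, hp⟩ := hcon
  by_cases hxon : ∃ k, k ≤ p.len ∧ p.vert k = x
  case neg =>
    push_neg at hxon
    exact walk_descend hd hb hInd hyz hxZ hxy hxz p.toWalk hp
      (fun j hj => hxon j hj)
  obtain ⟨k, hk, hkx⟩ := hxon
  have hk0 : 0 < k := by
    rcases Nat.eq_zero_or_pos k with h | h
    · exfalso
      apply hxy
      rw [← hkx, h, p.first]
    · exact h
  have hkl : k < p.len := by
    rcases eq_or_lt_of_le hk with h | h
    · exfalso
      apply hxz
      rw [← hkx, h, p.last]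
    · exact h
  have hu_val : edirValid G (p.vert (k - 1)) x (p.edir (k - 1)) := by
    have h' := p.valid (k - 1) (by omega)
    rw [show k - 1 + 1 = k from by omega, hkx] at h'
    exact h'
  have hv_val : edirValid G x (p.vert (k + 1)) (p.edir k) := by
    have h' := p.valid k hkl
    rw [hkx] at h'
    exact h'
  have hne_uv : p.vert (k - 1) ≠ p.vert (k + 1) := by
    intro h
    have := p.inj (k - 1) (k + 1) (by omega) (by omega) h
    omega
  by_cases hcolx : p.collider k
  · -- x is a collider on p
    have hxAn : x ∈ G.An (Z ∪ {y, z}) := by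
      have h' := (hp k hk0 hkl).1 hcolx
      rw [hkx] at h'
      exact h'
    obtain ⟨w, hw, hanc⟩ := hxAn
    have hxw : x ≠ w := by
      intro hcon'
      subst hcon'
      rcases hw with h | h | h
      · exact hxZ h
      · exact hxy h
      · exact hxz h
    rcases Relation.ReflTransGen.cases_head hanc with heq | ⟨d, hxd, hdw⟩
    · exact absurd heq hxw
    have hdAn : d ∈ G.An (Z ∪ {y, z}) := ⟨w, hw, hdw⟩
    have hdx : d ≠ x := (anc_ne_of_dir hd hxd).symm
    have hdv : d ∈ G.verts := (G.dir_mem hxd).2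
    rcases chain_left hd hb hInd p hp hk0 hkl hkx hxd (fun _ => ⟨w, hw, hanc⟩) with
      ⟨m, hm, hvm⟩ | ⟨m, hm, e, hvalL, hh2L, hjuncL⟩ | ⟨hbwd, -⟩
    · -- d is on the left part of p
      rcases chain_right hd hb hInd p hp hk0 hkl hkx hxd (fun _ => ⟨w, hw, hanc⟩) with
        ⟨m'', h1'', h2'', hvm''⟩ | ⟨m'', h1'', h2'', e'', hval'', hh2'', hjunc''⟩ | ⟨hfwd, -⟩
      · -- both T : contradiction
        have := p.inj m m'' (by omega) (by omega) (by rw [hvm, hvm''])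
        omega
      · -- left T, right E
        refine finish1 hd hb hInd hyz hxZ hxy hxz p hp hk0 hkl hkx hm h1''
          (by omega) h2'' (f := e''.flip) (by rw [hvm]; exact edirValid_flip hval'') ?_ ?_
        · intro hm0
          refine ⟨fun _ => by rw [hvm]; exact hdAn, fun hn => ?_⟩
          exact (hp m hm0 (by omega)).2
            (fun hcoll => hn ⟨hcoll.1, headAt1_flip.mpr hh2''⟩)
        · intro hblen
          obtain ⟨j1, j2⟩ := hjunc'' hblen
          constructor
          · rintro ⟨hL, hR⟩
            exact j1 ⟨hR, headAt2_flip.mp hL⟩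
          · intro hn
            apply j2
            rintro ⟨q1, q2⟩
            exact hn ⟨headAt2_flip.mpr q2, q1⟩
      · -- right SW : contradicts collider
        have h1R := hcolx.2
        rw [hfwd] at h1R
        rcases h1R with h | h <;> exact EdgeDir.noConfusion h
    · -- left E
      rcases chain_right hd hb hInd p hp hk0 hkl hkx hxd (fun _ => ⟨w, hw, hanc⟩) with
        ⟨m'', h1'', h2'', hvm''⟩ | ⟨m'', h1'', h2'', e'', hval'', hh2'', hjunc''⟩ | ⟨hfwd, -⟩
      · -- left E, right T
        refine finish1 hd hb hInd hyz hxZ hxy hxz p hp hk0 hkl hkx hm h1''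
          (by omega) h2'' (f := e) (by rw [hvm'']; exact hvalL) hjuncL ?_
        intro hblen
        refine ⟨fun _ => by rw [hvm'']; exact hdAn, fun hn => ?_⟩
        exact (hp m'' (by omega) hblen).2 (fun hcoll => hn ⟨hh2L, hcoll.2⟩)
      · -- both E : two-edge stitch through d
        refine finish2 hd hb hInd hyz hxZ hxy hxz p hp hk0 hkl hkx hm h1''
          (by omega) h2'' hdv hdx (f1 := e) (f2 := e''.flip) hvalL
          (edirValid_flip hval'') hjuncL
          ⟨fun _ => hdAn, fun hn => absurd ⟨hh2L, headAt1_flip.mpr hh2''⟩ hn⟩ ?_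
        intro hblen
        obtain ⟨j1, j2⟩ := hjunc'' hblen
        constructor
        · rintro ⟨hL, hR⟩
          exact j1 ⟨hR, headAt2_flip.mp hL⟩
        · intro hn
          apply j2
          rintro ⟨q1, q2⟩
          exact hn ⟨headAt2_flip.mpr q2, q1⟩
      · -- right SW : contradicts collider
        have h1R := hcolx.2
        rw [hfwd] at h1R
        rcases h1R with h | h <;> exact EdgeDir.noConfusion h
    · -- left SW : contradicts collider
      have h2L := hcolx.1
      rw [hbwd] at h2L
      rcases h2L with h | h <;> exact EdgeDir.noConfusion h
  · -- x is a noncollider on p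
    by_cases hfk : p.edir k = EdgeDir.fwd
    · -- x → v
      have hxt : G.dir x (p.vert (k + 1)) := by
        rw [hfk] at hv_val
        exact hv_val
      by_cases hfk1 : p.edir (k - 1) = EdgeDir.fwd
      · -- u → x → v : direct shortcut
        have hux : G.dir (p.vert (k - 1)) x := by
          rw [hfk1] at hu_val
          exact hu_val
        have huv := dir_shortcut hd hb hInd hux hxt hne_uv
        refine finish1 hd hb hInd hyz hxZ hxy hxz p hp hk0 hkl hkx le_rfl le_rfl
          (by omega) (by omega) (f := .fwd) huv ?_ ?_
        · intro ha0
          refine ⟨fun hcl => absurd hcl.2 (by simp [headAt1]), fun _ => ?_⟩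
          refine (hp (k - 1) ha0 (by omega)).2 (fun hcoll => ?_)
          have hc2 := hcoll.2
          rw [hfk1] at hc2
          rcases hc2 with h | h <;> exact EdgeDir.noConfusion h
        · intro hblen
          constructor
          · rintro ⟨-, hR⟩
            refine (hp (k + 1) (by omega) hblen).1 ⟨?_, hR⟩
            show headAt2 (p.edir (k + 1 - 1))
            rw [show k + 1 - 1 = k from by omega, hfk]
            exact Or.inl rfl
          · intro hn
            exact (hp (k + 1) (by omega) hblen).2
              (fun hcoll => hn ⟨Or.inl rfl, hcoll.2⟩)
      · -- left chain with target v
        rcases chain_left hd hb hInd p hp hk0 hkl hkx hxt (fun h => absurd h hfk1) with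
          ⟨m, hm, hvm⟩ | ⟨m, hm, e, hvalL, hh2L, hjuncL⟩ | ⟨hbwd, hdir_tu⟩
        · have := p.inj m (k + 1) (by omega) (by omega) hvm
          omega
        · refine finish1 hd hb hInd hyz hxZ hxy hxz p hp hk0 hkl hkx hm le_rfl
            (by omega) (by omega) (f := e) hvalL hjuncL ?_
          intro hblen
          constructor
          · rintro ⟨-, hR⟩
            refine (hp (k + 1) (by omega) hblen).1 ⟨?_, hR⟩
            show headAt2 (p.edir (k + 1 - 1))
            rw [show k + 1 - 1 = k from by omega, hfk]
            exact Or.inl rfl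
          · intro hn
            exact (hp (k + 1) (by omega) hblen).2 (fun hcoll => hn ⟨hh2L, hcoll.2⟩)
        · -- switch to the right chain with target u
          have hxu : G.dir x (p.vert (k - 1)) := by
            rw [hbwd] at hu_val
            exact hu_val
          rcases chain_right hd hb hInd p hp hk0 hkl hkx hxu
            (fun h => by rw [hfk] at h; exact EdgeDir.noConfusion h) with
            ⟨m'', h1'', h2'', hvm''⟩ | ⟨m'', h1'', h2'', e'', hval'', hh2'', hjunc''⟩ |
            ⟨-, hdir2⟩
          · have := p.inj m'' (k - 1) (by omega) (by omega) hvm''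
            omega
          · refine finish1 hd hb hInd hyz hxZ hxy hxz p hp hk0 hkl hkx le_rfl h1''
              (by omega) h2'' (f := e''.flip) (edirValid_flip hval'') ?_ ?_
            · intro ha0
              constructor
              · rintro ⟨hL, -⟩
                refine (hp (k - 1) ha0 (by omega)).1 ⟨hL, ?_⟩
                rw [hbwd]
                exact Or.inl rfl
              · intro hn
                exact (hp (k - 1) ha0 (by omega)).2
                  (fun hcoll => hn ⟨hcoll.1, headAt1_flip.mpr hh2''⟩)
            · intro hblen
              obtain ⟨j1, j2⟩ := hjunc'' hblen
              constructor
              · rintro ⟨hL, hR⟩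
                exact j1 ⟨hR, headAt2_flip.mp hL⟩
              · intro hn
                apply j2
                rintro ⟨q1, q2⟩
                exact hn ⟨headAt2_flip.mpr q2, q1⟩
          · exact absurd hdir2 (dir_asymm hd hdir_tu)
    · -- tail of x on the left side
      have h1k : headAt1 (p.edir k) := MWalk.headAt1_of_ne_fwd hfk
      have hbk1 : p.edir (k - 1) = EdgeDir.bwd :=
        MWalk.edir_eq_bwd_of_not_headAt2 (fun hh => hcolx ⟨hh, h1k⟩)
      have hxu : G.dir x (p.vert (k - 1)) := by
        rw [hbk1] at hu_val
        exact hu_val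
      by_cases hbk : p.edir k = EdgeDir.bwd
      · -- v → x → u : direct shortcut
        have hvx : G.dir (p.vert (k + 1)) x := by
          rw [hbk] at hv_val
          exact hv_val
        have hvu := dir_shortcut hd hb hInd hvx hxu (Ne.symm hne_uv)
        refine finish1 hd hb hInd hyz hxZ hxy hxz p hp hk0 hkl hkx le_rfl le_rfl
          (by omega) (by omega) (f := .bwd) hvu ?_ ?_
        · intro ha0
          constructor
          · rintro ⟨hL, -⟩
            refine (hp (k - 1) ha0 (by omega)).1 ⟨hL, ?_⟩
            rw [hbk1]
            exact Or.inl rfl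
          · intro hn
            exact (hp (k - 1) ha0 (by omega)).2
              (fun hcoll => hn ⟨hcoll.1, Or.inl rfl⟩)
        · intro hblen
          constructor
          · rintro ⟨hL, -⟩
            rcases hL with h | h <;> exact EdgeDir.noConfusion h
          · intro hn
            refine (hp (k + 1) (by omega) hblen).2 (fun hcoll => ?_)
            have hc1 : headAt2 (p.edir (k + 1 - 1)) := hcoll.1
            rw [show k + 1 - 1 = k from by omega, hbk] at hc1
            rcases hc1 with h | h <;> exact EdgeDir.noConfusion h
      · -- x ↔ v with x → u : right chain with target u
        rcases chain_right hd hb hInd p hp hk0 hkl hkx hxu (fun h => absurd h hbk) with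
          ⟨m'', h1'', h2'', hvm''⟩ | ⟨m'', h1'', h2'', e'', hval'', hh2'', hjunc''⟩ |
          ⟨hfwd, -⟩
        · have := p.inj m'' (k - 1) (by omega) (by omega) hvm''
          omega
        · refine finish1 hd hb hInd hyz hxZ hxy hxz p hp hk0 hkl hkx le_rfl h1''
            (by omega) h2'' (f := e''.flip) (edirValid_flip hval'') ?_ ?_
          · intro ha0
            constructor
            · rintro ⟨hL, -⟩
              refine (hp (k - 1) ha0 (by omega)).1 ⟨hL, ?_⟩
              rw [hbk1]
              exact Or.inl rfl
            · intro hn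
              exact (hp (k - 1) ha0 (by omega)).2
                (fun hcoll => hn ⟨hcoll.1, headAt1_flip.mpr hh2''⟩)
          · intro hblen
            obtain ⟨j1, j2⟩ := hjunc'' hblen
            constructor
            · rintro ⟨hL, hR⟩
              exact j1 ⟨hR, headAt2_flip.mp hL⟩
            · intro hn
              apply j2
              rintro ⟨q1, q2⟩
              exact hn ⟨headAt2_flip.mpr q2, q1⟩
        · exact absurd hfwd hfk

end MixedGraph
namespace MixedGraph

variable {V : Type*}

lemma removable_of_Cprop {G : MixedGraph V} {x : V} (hG : G.IsMAG) (hC : Cprop G x) :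
    G.Removable x := by
  intro a b ha hb hax hbx hab Z hZ
  constructor
  · exact fun h => mSep_induce_of_mSep h
  · intro hsep
    by_contra hcon
    have hxZ : x ∉ Z := by
      intro hx
      exact ((hZ hx).2 (Or.inl rfl))
    have hInd : ∀ a b, a ∈ G.verts → b ∈ G.verts → a ≠ x → b ≠ x → a ≠ b →
        IndCon G x a b → G.adj a b :=
      fun a b ha hb' hax hbx hab hcon' => adj_of_IndCon hG hC ha hb' hax hbx hab hcon'
    exact core_step hG.no_dir_cycle hG.no_almost_dir_cycle hInd hab hxZ
      (Ne.symm hax) (Ne.symm hbx) hcon hsep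

lemma removable_transfer {G1 G2 : MixedGraph V} {x : V} (h1 : G1.IsMAG) (h2 : G2.IsMAG)
    (hv : G1.verts = G2.verts) (heq : MarkovEquiv G1 G2) (hrem : G1.Removable x) :
    G2.Removable x :=
  removable_of_Cprop h2 (Cprop_transfer hv heq (Cprop_of_removable hrem))

lemma markovEquiv_symm {G1 G2 : MixedGraph V} (hv : G1.verts = G2.verts)
    (heq : MarkovEquiv G1 G2) : MarkovEquiv G2 G1 := by
  intro a ha b hb hab Z hZ
  rw [← hv] at ha hb hZ
  exact (heq a ha b hb hab Z hZ).symm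

lemma markovEquiv_reduce {G1 G2 : MixedGraph V} {x : V}
    (hr1 : G1.Removable x) (hr2 : G2.Removable x)
    (hv : G1.verts = G2.verts) (heq : MarkovEquiv G1 G2) :
    MarkovEquiv (G1.induce (G1.verts \ {x})) (G2.induce (G2.verts \ {x})) := by
  intro a ha b hb hab Z hZ
  have ha' : a ∈ G1.verts ∧ a ≠ x := ⟨ha.1, ha.2.2⟩
  have hb' : b ∈ G1.verts ∧ b ≠ x := ⟨hb.1, hb.2.2⟩
  have hZ1 : Z ⊆ G1.verts \ {x, a, b} := by
    intro v hvz
    obtain ⟨⟨hv1, hv2, hv3⟩, hv4⟩ := hZ hvz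
    refine ⟨hv1, ?_⟩
    rintro (h | h | h)
    · exact hv3 h
    · exact hv4 (Or.inl h)
    · exact hv4 (Or.inr h)
  have hZ2 : Z ⊆ G1.verts \ {a, b} := by
    intro v hvz
    obtain ⟨⟨hv1, _, _⟩, hv4⟩ := hZ hvz
    exact ⟨hv1, hv4⟩
  have e1 := (hr1 a b ha'.1 hb'.1 ha'.2 hb'.2 hab Z hZ1).symm
  have e2 := heq a ha'.1 b hb'.1 hab Z hZ2
  have hZ1' : Z ⊆ G2.verts \ {x, a, b} := hv ▸ hZ1
  have e3 := hr2 a b (hv ▸ ha'.1) (hv ▸ hb'.1) ha'.2 hb'.2 hab Z hZ1'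
  exact e1.trans (e2.trans e3)

lemma isMAG_reduce {G : MixedGraph V} {x : V} (hG : G.IsMAG) (hrem : G.Removable x) :
    (G.induce (G.verts \ {x})).IsMAG := by
  constructor
  · exact fun a b h' hanc' => hG.no_dir_cycle a b h'.1 (induce_anc_le hanc')
  · exact fun a b h' hanc' => hG.no_almost_dir_cycle a b h'.1 (induce_anc_le hanc')
  · intro a ha b hb hab hadj
    have ha1 : a ∈ G.verts := ha.1
    have hb1 : b ∈ G.verts := hb.1
    have hax : a ≠ x := ha.2.2
    have hbx : b ≠ x := hb.2.2
    have hadjG : ¬ G.adj a b := by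
      intro h
      apply hadj
      rcases h with h | h | h
      · exact Or.inl ⟨h, ha.2, hb.2⟩
      · exact Or.inr (Or.inl ⟨h, hb.2, ha.2⟩)
      · exact Or.inr (Or.inr ⟨h, ha.2, hb.2⟩)
    obtain ⟨Z, hZ, hsep⟩ := hG.maximal a ha1 b hb1 hab hadjG
    refine ⟨Z \ {x}, ?_, ?_⟩
    · intro v hvz
      obtain ⟨hv1, hv2⟩ := hZ hvz.1
      exact ⟨⟨hv1, hv1, hvz.2⟩, hv2⟩
    · exact mSep_induce_of_mSep (mSep_drop_x hrem ha1 hb1 hax hbx hab hZ hsep)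

lemma ext' {G1 G2 : MixedGraph V} (hv : G1.verts = G2.verts)
    (hdir : G1.dir = G2.dir) (hbi : G1.bi = G2.bi) : G1 = G2 := by
  cases G1
  cases G2
  simp only at hv hdir hbi
  subst hv
  subst hdir
  subst hbi
  rfl

lemma induce_univ {G : MixedGraph V} {W : Set V} (hsub : G.verts ⊆ W) :
    G.induce W = G := by
  refine ext' ?_ ?_ ?_
  · exact Set.inter_eq_self_of_subset_left hsub
  · funext a b
    apply propext
    exact ⟨fun h => h.1, fun h => ⟨h, hsub (G.dir_mem h).1, hsub (G.dir_mem h).2⟩⟩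
  · funext a b
    apply propext
    exact ⟨fun h => h.1, fun h => ⟨h, hsub (G.bi_mem h).1, hsub (G.bi_mem h).2⟩⟩

lemma induce_induce_diff (G : MixedGraph V) (S : Set V) (x : V) :
    (G.induce S).induce ((G.induce S).verts \ {x}) = G.induce (S \ {x}) := by
  refine ext' ?_ ?_ ?_
  · show G.verts ∩ S ∩ ((G.verts ∩ S) \ {x}) = G.verts ∩ (S \ {x})
    ext v
    constructor
    · rintro ⟨⟨h1, h2⟩, ⟨-, h3⟩⟩
      exact ⟨h1, h2, h3⟩
    · rintro ⟨h1, h2, h3⟩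
      exact ⟨⟨h1, h2⟩, ⟨⟨h1, h2⟩, h3⟩⟩
  · funext a b
    apply propext
    constructor
    · rintro ⟨⟨h, ha, hb⟩, ⟨⟨hav, -⟩, hax⟩, ⟨⟨hbv, -⟩, hbx⟩⟩
      exact ⟨h, ⟨ha, hax⟩, ⟨hb, hbx⟩⟩
    · rintro ⟨h, ⟨ha, hax⟩, ⟨hb, hbx⟩⟩
      have hav := (G.dir_mem h).1
      have hbv := (G.dir_mem h).2
      exact ⟨⟨h, ha, hb⟩, ⟨⟨hav, ha⟩, hax⟩, ⟨⟨hbv, hb⟩, hbx⟩⟩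
  · funext a b
    apply propext
    constructor
    · rintro ⟨⟨h, ha, hb⟩, ⟨⟨hav, -⟩, hax⟩, ⟨⟨hbv, -⟩, hbx⟩⟩
      exact ⟨h, ⟨ha, hax⟩, ⟨hb, hbx⟩⟩
    · rintro ⟨h, ⟨ha, hax⟩, ⟨hb, hbx⟩⟩
      have hav := (G.bi_mem h).1
      have hbv := (G.bi_mem h).2
      exact ⟨⟨h, ha, hb⟩, ⟨⟨hav, ha⟩, hax⟩, ⟨⟨hbv, hb⟩, hbx⟩⟩

end MixedGraph
lemma drop_set_diff {V : Type*} {l : List V} (hnd : l.Nodup) {i : ℕ} (h : i < l.length) :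
    ({v | v ∈ l.drop i} : Set V) \ {l.get ⟨i, h⟩} = {v | v ∈ l.drop (i + 1)} := by
  have hcons : l.drop i = l.get ⟨i, h⟩ :: l.drop (i + 1) := by
    rw [List.get_eq_getElem]
    exact List.drop_eq_getElem_cons h
  have hnd' : (l.drop i).Nodup := hnd.sublist (List.drop_sublist i l)
  rw [hcons] at hnd'
  have hnotmem : l.get ⟨i, h⟩ ∉ l.drop (i + 1) := (List.nodup_cons.mp hnd').1
  ext v
  simp only [Set.mem_diff, Set.mem_setOf_eq, Set.mem_singleton_iff, hcons, List.mem_cons]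
  constructor
  · rintro ⟨h1 | h1, h2⟩
    · exact absurd h1 h2
    · exact h1
  · intro h1
    exact ⟨Or.inr h1, fun hc => hnotmem (hc ▸ h1)⟩

lemma isROrder_mono {V : Type*} {G1 G2 : MixedGraph V}
    (h1 : G1.IsMAG) (h2 : G2.IsMAG) (hv : G1.verts = G2.verts)
    (heq : MixedGraph.MarkovEquiv G1 G2) {l : List V}
    (hro : MixedGraph.IsROrder G1 l) : MixedGraph.IsROrder G2 l := by
  obtain ⟨⟨hnd, hmem⟩, hrem⟩ := hro
  have hmem2 : ∀ v, v ∈ l ↔ v ∈ G2.verts := by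
    intro v
    rw [hmem v, hv]
  have hInv : ∀ i, i ≤ l.length →
      (G1.induce {v | v ∈ l.drop i}).IsMAG ∧ (G2.induce {v | v ∈ l.drop i}).IsMAG ∧
      MixedGraph.MarkovEquiv (G1.induce {v | v ∈ l.drop i})
        (G2.induce {v | v ∈ l.drop i}) := by
    intro i
    induction i with
    | zero =>
      intro _
      rw [List.drop_zero]
      have e1 : G1.induce {v | v ∈ l} = G1 :=
        MixedGraph.induce_univ (fun v hv' => (hmem v).mpr hv')
      have e2 : G2.induce {v | v ∈ l} = G2 :=
        MixedGraph.induce_univ (fun v hv' => (hmem2 v).mpr hv')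
      rw [e1, e2]
      exact ⟨h1, h2, heq⟩
    | succ i ih =>
      intro hi
      have hi' : i < l.length := by omega
      obtain ⟨m1, m2, me⟩ := ih (by omega)
      have hvv : (G1.induce {v | v ∈ l.drop i}).verts
          = (G2.induce {v | v ∈ l.drop i}).verts := by
        show G1.verts ∩ _ = G2.verts ∩ _
        rw [hv]
      have hr1 : (G1.induce {v | v ∈ l.drop i}).Removable (l.get ⟨i, hi'⟩) := hrem i hi'
      have hr2 : (G2.induce {v | v ∈ l.drop i}).Removable (l.get ⟨i, hi'⟩) :=
        MixedGraph.removable_transfer m1 m2 hvv me hr1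
      have e1 : (G1.induce {v | v ∈ l.drop i}).induce
          ((G1.induce {v | v ∈ l.drop i}).verts \ {l.get ⟨i, hi'⟩})
          = G1.induce {v | v ∈ l.drop (i + 1)} := by
        rw [MixedGraph.induce_induce_diff, drop_set_diff hnd hi']
      have e2 : (G2.induce {v | v ∈ l.drop i}).induce
          ((G2.induce {v | v ∈ l.drop i}).verts \ {l.get ⟨i, hi'⟩})
          = G2.induce {v | v ∈ l.drop (i + 1)} := by
        rw [MixedGraph.induce_induce_diff, drop_set_diff hnd hi']
      refine ⟨?_, ?_, ?_⟩
      · rw [← e1]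
        exact MixedGraph.isMAG_reduce m1 hr1
      · rw [← e2]
        exact MixedGraph.isMAG_reduce m2 hr2
      · rw [← e1, ← e2]
        exact MixedGraph.markovEquiv_reduce hr1 hr2 hvv me
  refine ⟨⟨hnd, hmem2⟩, ?_⟩
  intro i hi
  obtain ⟨m1, m2, me⟩ := hInv i (le_of_lt hi)
  have hvv : (G1.induce {v | v ∈ l.drop i}).verts
      = (G2.induce {v | v ∈ l.drop i}).verts := by
    show G1.verts ∩ _ = G2.verts ∩ _
    rw [hv]
  exact MixedGraph.removable_transfer m1 m2 hvv me (hrem i hi)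

/-- Two Markov equivalent MAGs over the same vertex set have the same
set of r-orders: `Π^r(G1) = Π^r(G2)`. -/
theorem stmt_6 {V : Type*} [Fintype V] (G1 G2 : MixedGraph V)
    (h1 : G1.IsMAG) (h2 : G2.IsMAG) (hv : G1.verts = G2.verts)
    (heq : MixedGraph.MarkovEquiv G1 G2) :
    ∀ l : List V, (MixedGraph.IsROrder G1 l ↔ MixedGraph.IsROrder G2 l) := by
  intro l
  constructor
  · exact isROrder_mono h1 h2 hv heq
  · exact isROrder_mono h2 h1 hv.symm (MixedGraph.markovEquiv_symm hv heq)
end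

section
/- For any DAG G, every c-order of G is an r-order of G, i.e., Π^c(G) ⊆ Π^r(G). -/
private lemma anc_of_anc_induce {V : Type*} (H : MixedGraph V) (W : Set V) {a b : V}
    (h : (H.induce W).anc a b) : H.anc a b :=
  Relation.ReflTransGen.mono (fun _ _ (hd : (H.induce W).dir _ _) => hd.1) _ _ h

private lemma sink_anc_eq_self {V : Type*} {H : MixedGraph V} {x : V}
    (hx : ∀ v, ¬ H.dir x v) {w : V} (h : H.anc x w) : w = x := by
  rcases Relation.ReflTransGen.cases_head h with h | ⟨c, hc, _⟩
  · exact h.symm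
  · exact absurd hc (hx _)

private lemma anc_induce_of_anc {V : Type*} {H : MixedGraph V} {x : V}
    (hx : ∀ v, ¬ H.dir x v) {b : V} (hb : b ≠ x) :
    ∀ {a : V}, H.anc a b → a ≠ x → (H.induce (H.verts \ {x})).anc a b := by
  intro a h
  induction h using Relation.ReflTransGen.head_induction_on with
  | refl => intro _; exact Relation.ReflTransGen.refl
  | @head a c hd htail ih =>
    intro ha
    have hc : c ≠ x := by
      rintro rfl
      exact hb (sink_anc_eq_self hx htail)
    exact Relation.ReflTransGen.head
      ⟨hd, ⟨(H.dir_mem hd).1, ha⟩, ⟨(H.dir_mem hd).2, hc⟩⟩ (ih hc)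

private def liftPath {V : Type*} {H : MixedGraph V} {W : Set V} {y z : V}
    (p : MPath (H.induce W) y z) : MPath H y z where
  len := p.len
  len_pos := p.len_pos
  vert := p.vert
  edir := p.edir
  first := p.first
  last := p.last
  mem i hi := (p.mem i hi).1
  inj := p.inj
  valid i hi := by
    have h := p.valid i hi
    cases he : p.edir i <;> rw [he] at h <;> exact h.1

private def restrictPath {V : Type*} {H : MixedGraph V} {x y z : V}
    (p : MPath H y z) (hp : ∀ i, i ≤ p.len → p.vert i ≠ x) :
    MPath (H.induce (H.verts \ {x})) y z where
  len := p.len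
  len_pos := p.len_pos
  vert := p.vert
  edir := p.edir
  first := p.first
  last := p.last
  mem i hi := ⟨p.mem i hi, p.mem i hi, hp i hi⟩
  inj := p.inj
  valid i hi := by
    have h := p.valid i hi
    have m1 : p.vert i ∈ H.verts \ {x} := ⟨p.mem i hi.le, hp i hi.le⟩
    have m2 : p.vert (i + 1) ∈ H.verts \ {x} := ⟨p.mem (i + 1) hi, hp (i + 1) hi⟩
    cases he : p.edir i <;> rw [he] at h
    · exact ⟨h, m1, m2⟩
    · exact ⟨h, m2, m1⟩
    · exact ⟨h, m1, m2⟩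

private lemma sink_removable {V : Type*} {H : MixedGraph V}
    (hbi : ∀ a b, ¬ H.bi a b) {x : V} (hx : ∀ v, ¬ H.dir x v) :
    H.Removable x := by
  intro y z hy hz hyx hzx hyz Z hZ
  have hZx : ∀ w ∈ Z, w ≠ x := by
    intro w hw h
    exact (hZ hw).2 (by simp [h])
  have hwx : ∀ w ∈ Z ∪ ({y, z} : Set V), w ≠ x := by
    intro w hw
    rcases hw with hw | hw
    · exact hZx w hw
    · simp only [Set.mem_insert_iff, Set.mem_singleton_iff] at hw
      rcases hw with rfl | rfl
      · exact hyx
      · exact hzx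
  constructor
  · intro hs p'
    obtain ⟨i, h1, h2, hb⟩ := hs (liftPath p')
    refine ⟨i, h1, h2, ?_⟩
    rcases hb with ⟨hc, hna⟩ | ⟨hc, hmem⟩
    · exact Or.inl ⟨hc, fun w hw ha => hna w hw (anc_of_anc_induce _ _ ha)⟩
    · exact Or.inr ⟨hc, hmem⟩
  · intro hs p
    by_cases hpx : ∀ i, i ≤ p.len → p.vert i ≠ x
    · obtain ⟨i, h1, h2, hb⟩ := hs (restrictPath p hpx)
      refine ⟨i, h1, h2, ?_⟩
      rcases hb with ⟨hc, hna⟩ | ⟨hc, hmem⟩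
      · refine Or.inl ⟨hc, fun w hw ha => hna w hw ?_⟩
        exact anc_induce_of_anc hx (hwx w hw) ha (hpx i h2.le)
      · exact Or.inr ⟨hc, hmem⟩
    · push_neg at hpx
      obtain ⟨i, hi, hix⟩ := hpx
      have h0 : 0 < i := by
        rcases Nat.eq_zero_or_pos i with rfl | h
        · exact (hyx (p.first.symm.trans hix)).elim
        · exact h
      have hlen : i < p.len := by
        rcases lt_or_eq_of_le hi with h | rfl
        · exact h
        · exact (hzx (p.last.symm.trans hix)).elim
      have hv1 := p.valid (i - 1) (by omega)
      have hi1 : i - 1 + 1 = i := by omega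
      rw [hi1, hix] at hv1
      have hv2 := p.valid i hlen
      rw [hix] at hv2
      have hc : p.collider i := by
        constructor
        · cases he : p.edir (i - 1) <;> rw [he] at hv1
          · exact Or.inl rfl
          · exact absurd hv1 (hx _)
          · exact absurd hv1 (hbi _ _)
        · cases he : p.edir i <;> rw [he] at hv2
          · exact absurd hv2 (hx _)
          · exact Or.inl rfl
          · exact absurd hv2 (hbi _ _)
      refine ⟨i, h0, hlen, Or.inl ⟨hc, ?_⟩⟩
      intro w hw ha
      rw [hix] at ha
      exact hwx w hw (sink_anc_eq_self hx ha)

/-- For any DAG `G`, every c-order of `G` is an r-order of `G`. -/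
theorem stmt_7 {V : Type*} [Fintype V] (G : MixedGraph V) (hG : G.IsDAG) :
    ∀ l : List V, MixedGraph.IsCOrder G l → MixedGraph.IsROrder G l := by
  intro l hc
  refine ⟨hc.1, fun i h => ?_⟩
  refine sink_removable ?_ (hc.2 i h)
  intro a b hab
  exact hG.2 a b hab.1
end

section
/- Let G be a MAG over V, let X ∈ V, and let Y ∈ Mb(X;G). Then Y is a neighbor of X in G if and only if for every proper subset S ⊊ Mb(X;G)∖{Y}, the set S does not m-separate X and Y in G. -/
/-! ### Auxiliary machinery for Statement 8 -/

/-- Reversal of an edge orientation. -/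
def edRev8 : EdgeDir → EdgeDir
  | .fwd => .bwd
  | .bwd => .fwd
  | .bidir => .bidir

lemma headAt1_edRev8 (e : EdgeDir) : headAt1 (edRev8 e) ↔ headAt2 e := by
  cases e <;> simp [edRev8, headAt1, headAt2]

lemma headAt2_edRev8 (e : EdgeDir) : headAt2 (edRev8 e) ↔ headAt1 e := by
  cases e <;> simp [edRev8, headAt1, headAt2]

lemma eq_fwd_of_not_headAt1 (e : EdgeDir) (h : ¬ headAt1 e) : e = .fwd := by
  cases e <;> simp [headAt1] at h ⊢

lemma eq_bwd_of_not_headAt2 (e : EdgeDir) (h : ¬ headAt2 e) : e = .bwd := by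
  cases e <;> simp [headAt2] at h ⊢

namespace MPath

variable {V : Type*} {G : MixedGraph V} {x y : V}

/-- Change the (propositionally equal) endpoints of a path. -/
def copy8 (p : MPath G x y) {x' y' : V} (hx : x = x') (hy : y = y') : MPath G x' y' where
  len := p.len
  len_pos := p.len_pos
  vert := p.vert
  edir := p.edir
  first := by rw [p.first, hx]
  last := by rw [p.last, hy]
  mem := p.mem
  inj := p.inj
  valid := p.valid

/-- The reversal of a path. -/
def rev8 (p : MPath G x y) : MPath G y x where
  len := p.len
  len_pos := p.len_pos
  vert i := p.vert (p.len - i)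
  edir i := edRev8 (p.edir (p.len - 1 - i))
  first := by simp [p.last]
  last := by simp [p.first]
  mem i _ := p.mem _ (by omega)
  inj i j hi hj h := by
    have := p.inj _ _ (by omega) (by omega) h
    omega
  valid i hi := by
    have hv := p.valid (p.len - 1 - i) (by omega)
    rw [show p.len - 1 - i + 1 = p.len - i from by omega] at hv
    show edirValid G (p.vert (p.len - i)) (p.vert (p.len - (i + 1)))
      (edRev8 (p.edir (p.len - 1 - i)))
    rw [show p.len - (i + 1) = p.len - 1 - i from by omega]
    cases he : p.edir (p.len - 1 - i) <;> rw [he] at hv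
    · exact hv
    · exact hv
    · exact G.bi_symm hv

/-- The suffix of a path from position `a`. -/
def suff8 (p : MPath G x y) (a : ℕ) (ha : a < p.len) : MPath G (p.vert a) y where
  len := p.len - a
  len_pos := by omega
  vert i := p.vert (a + i)
  edir i := p.edir (a + i)
  first := by simp
  last := by
    show p.vert (a + (p.len - a)) = y
    rw [show a + (p.len - a) = p.len from by omega, p.last]
  mem i hi := p.mem _ (by omega)
  inj i j hi hj h := by
    have := p.inj _ _ (by omega) (by omega) h
    omega
  valid i hi := p.valid (a + i) (by omega)

/-- A single-edge path. -/
def single8 (hxy : x ≠ y) (hmx : x ∈ G.verts) (hmy : y ∈ G.verts) (e : EdgeDir)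
    (hv : edirValid G x y e) : MPath G x y where
  len := 1
  len_pos := Nat.one_pos
  vert i := if i = 0 then x else y
  edir _ := e
  first := rfl
  last := by norm_num
  mem i hi := by by_cases h : i = 0 <;> simp [h, hmx, hmy]
  inj i j hi hj h := by interval_cases i <;> interval_cases j <;> simp_all
  valid i hi := by interval_cases i; simpa using hv

lemma suff8_isColliderPath (p : MPath G x y) (a : ℕ) (ha : a < p.len)
    (hp : p.isColliderPath) : (p.suff8 a ha).isColliderPath := by
  intro j hj0 hjl
  have hlen : (p.suff8 a ha).len = p.len - a := rfl
  have hc := hp (a + j) (by omega) (by omega)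
  refine ⟨?_, hc.2⟩
  show headAt2 (p.edir (a + (j - 1)))
  rw [show a + (j - 1) = a + j - 1 from by omega]
  exact hc.1

end MPath

/-- The D-SEP style separating set: vertices with a collider path to `x` all of whose
vertices are ancestors of `x` or of `y`. -/
def dsep8 {V : Type*} (G : MixedGraph V) (x y : V) : Set V :=
  {v | v ≠ x ∧ v ≠ y ∧ ∃ p : MPath G v x, p.isColliderPath ∧
    ∀ i ≤ p.len, (G.anc (p.vert i) x ∨ G.anc (p.vert i) y)}

lemma dsep8_subset {V : Type*} {G : MixedGraph V} {x y : V} :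
    dsep8 G x y ⊆ G.mb x \ {y} := by
  rintro v ⟨h1, h2, p, hp, -⟩
  exact ⟨⟨h1, p, hp⟩, h2⟩

lemma dsep8_anc {V : Type*} {G : MixedGraph V} {x y v : V} (hv : v ∈ dsep8 G x y) :
    G.anc v x ∨ G.anc v y := by
  obtain ⟨-, -, p, -, h⟩ := hv
  have := h 0 (Nat.zero_le _)
  rwa [p.first] at this

/-- The full set `Mb(x) \ {y}` never m-separates `x` from `y ∈ Mb(x)`. -/
lemma mb_not_sep8 {V : Type*} {G : MixedGraph V} {x y : V} (q : MPath G y x)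
    (hq : q.isColliderPath) : ¬ mSep G x y (G.mb x \ {y}) := by
  intro hm
  obtain ⟨i, hi0, hil, hcase⟩ := hm q.rev8
  have hlen : q.rev8.len = q.len := rfl
  have hcol : q.rev8.collider i := by
    have hc := hq (q.len - i) (by omega) (by omega)
    constructor
    · show headAt2 (edRev8 (q.edir (q.len - 1 - (i - 1))))
      rw [headAt2_edRev8, show q.len - 1 - (i - 1) = q.len - i from by omega]
      exact hc.2
    · show headAt1 (edRev8 (q.edir (q.len - 1 - i)))
      rw [headAt1_edRev8, show q.len - 1 - i = q.len - i - 1 from by omega]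
      exact hc.1
  rcases hcase with ⟨-, hall⟩ | ⟨hnc, -⟩
  · refine hall (q.rev8.vert i) (Or.inl ⟨⟨?_, ?_⟩, ?_⟩) Relation.ReflTransGen.refl
    · -- q.vert (q.len - i) ≠ x
      intro h
      have := q.inj (q.len - i) q.len (by omega) le_rfl (by rw [show q.rev8.vert i = q.vert (q.len - i) from rfl] at h; rw [h, q.last])
      omega
    · exact ⟨q.suff8 (q.len - i) (by omega), q.suff8_isColliderPath _ _ hq⟩
    · -- ≠ y
      intro h
      have h' : q.vert (q.len - i) = y := h
      have := q.inj (q.len - i) 0 (by omega) (by omega) (by rw [h', q.first])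
      omega
  · exact hnc hcol

/-- Key lemma: a path from `x` to `y` that is not blocked by `dsep8 G x y` has all
interior vertices colliders that are ancestors of `x` or `y`. -/
lemma key8 {V : Type*} {G : MixedGraph V} {x y : V} (p : MPath G x y)
    (hnb : ¬ p.blocked (dsep8 G x y)) :
    ∀ i, 0 < i → i < p.len →
      p.collider i ∧ (G.anc (p.vert i) x ∨ G.anc (p.vert i) y) := by
  have hfacts : ∀ i, 0 < i → i < p.len →
      (p.collider i → ∃ w ∈ dsep8 G x y ∪ ({x, y} : Set V), G.anc (p.vert i) w) ∧
      (¬ p.collider i → p.vert i ∉ dsep8 G x y) := by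
    intro i hi0 hil
    constructor
    · intro hc
      by_contra h
      push_neg at h
      exact hnb ⟨i, hi0, hil, Or.inl ⟨hc, h⟩⟩
    · intro hc hin
      exact hnb ⟨i, hi0, hil, Or.inr ⟨hc, hin⟩⟩
  have hca : ∀ i, 0 < i → i < p.len → p.collider i →
      G.anc (p.vert i) x ∨ G.anc (p.vert i) y := by
    intro i hi0 hil hc
    obtain ⟨w, hw, hanc⟩ := (hfacts i hi0 hil).1 hc
    rcases hw with hw | hw
    · exact (dsep8_anc hw).imp hanc.trans hanc.trans
    · rcases hw with rfl | hw
      · exact Or.inl hanc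
      · rw [Set.mem_singleton_iff] at hw
        subst hw
        exact Or.inr hanc
  have hR : ∀ d j, 0 < j → j + d = p.len → headAt2 (p.edir (j - 1)) →
      G.anc (p.vert j) x ∨ G.anc (p.vert j) y := by
    intro d
    induction d with
    | zero =>
      intro j hj0 hjl _
      rw [show j = p.len from by omega, p.last]
      exact Or.inr Relation.ReflTransGen.refl
    | succ d ih =>
      intro j hj0 hjl hh
      by_cases hc : p.collider j
      · exact hca j hj0 (by omega) hc
      · have hnh : ¬ headAt1 (p.edir j) := fun h => hc ⟨hh, h⟩
        have he := eq_fwd_of_not_headAt1 _ hnh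
        have hv := p.valid j (by omega)
        rw [he] at hv
        have hv' : G.dir (p.vert j) (p.vert (j + 1)) := hv
        have hnext := ih (j + 1) (by omega) (by omega)
          (by show headAt2 (p.edir j); rw [he]; exact Or.inl rfl)
        exact hnext.imp (Relation.ReflTransGen.head hv') (Relation.ReflTransGen.head hv')
  have hL : ∀ j, j < p.len → headAt1 (p.edir j) →
      G.anc (p.vert j) x ∨ G.anc (p.vert j) y := by
    intro j
    induction j with
    | zero =>
      intro _ _
      rw [p.first]
      exact Or.inl Relation.ReflTransGen.refl
    | succ n ih =>
      intro hjl hh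
      by_cases hc : p.collider (n + 1)
      · exact hca _ (by omega) hjl hc
      · have hnh : ¬ headAt2 (p.edir n) := fun h => hc ⟨h, hh⟩
        have he := eq_bwd_of_not_headAt2 _ hnh
        have hv := p.valid n (by omega)
        rw [he] at hv
        have hv' : G.dir (p.vert (n + 1)) (p.vert n) := hv
        have hprev := ih (by omega) (by rw [he]; exact Or.inl rfl)
        exact hprev.imp (Relation.ReflTransGen.head hv') (Relation.ReflTransGen.head hv')
  have hcol : ∀ i, 0 < i → i < p.len → p.collider i := by
    intro i
    induction i using Nat.strong_induction_on with
    | _ i IH =>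
      intro hi0 hil
      by_contra hnc
      have hancI : G.anc (p.vert i) x ∨ G.anc (p.vert i) y := by
        by_cases hh : headAt2 (p.edir (i - 1))
        · exact hR (p.len - i) i hi0 (by omega) hh
        · have he := eq_bwd_of_not_headAt2 _ hh
          have hv := p.valid (i - 1) (by omega)
          rw [show i - 1 + 1 = i from by omega, he] at hv
          have hv' : G.dir (p.vert i) (p.vert (i - 1)) := hv
          have hprev := hL (i - 1) (by omega) (by rw [he]; exact Or.inl rfl)
          exact hprev.imp (Relation.ReflTransGen.head hv') (Relation.ReflTransGen.head hv')
      have hlt : p.len - i < p.rev8.len := by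
        show p.len - i < p.len
        omega
      have hvv : p.rev8.vert (p.len - i) = p.vert i := by
        show p.vert (p.len - (p.len - i)) = p.vert i
        congr 1
        omega
      have hqlen : ((p.rev8.suff8 (p.len - i) hlt).copy8 hvv rfl).len = i := by
        show p.len - (p.len - i) = i
        omega
      have hqcp : ((p.rev8.suff8 (p.len - i) hlt).copy8 hvv rfl).isColliderPath := by
        intro j hj0 hjl
        rw [hqlen] at hjl
        have hcolij := IH (i - j) (by omega) (by omega) (by omega)
        constructor
        · show headAt2 (edRev8 (p.edir (p.len - 1 - (p.len - i + (j - 1)))))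
          rw [headAt2_edRev8,
            show p.len - 1 - (p.len - i + (j - 1)) = i - j from by omega]
          exact hcolij.2
        · show headAt1 (edRev8 (p.edir (p.len - 1 - (p.len - i + j))))
          rw [headAt1_edRev8,
            show p.len - 1 - (p.len - i + j) = i - j - 1 from by omega]
          exact hcolij.1
      have hqanc : ∀ j ≤ ((p.rev8.suff8 (p.len - i) hlt).copy8 hvv rfl).len,
          G.anc (((p.rev8.suff8 (p.len - i) hlt).copy8 hvv rfl).vert j) x ∨
          G.anc (((p.rev8.suff8 (p.len - i) hlt).copy8 hvv rfl).vert j) y := by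
        intro j hj
        rw [hqlen] at hj
        have hvq : ((p.rev8.suff8 (p.len - i) hlt).copy8 hvv rfl).vert j
            = p.vert (p.len - (p.len - i + j)) := rfl
        rcases eq_or_lt_of_le hj with heq | hji
        · rw [hvq, show p.len - (p.len - i + j) = 0 from by omega, p.first]
          exact Or.inl Relation.ReflTransGen.refl
        · rcases Nat.eq_zero_or_pos j with rfl | hj0
          · rw [hvq, show p.len - (p.len - i + 0) = i from by omega]
            exact hancI
          · have hcolij := IH (i - j) (by omega) (by omega) (by omega)
            rw [hvq, show p.len - (p.len - i + j) = i - j from by omega]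
            exact hca (i - j) (by omega) (by omega) hcolij
      have hmem : p.vert i ∈ dsep8 G x y := by
        refine ⟨?_, ?_, (p.rev8.suff8 (p.len - i) hlt).copy8 hvv rfl, hqcp, hqanc⟩
        · intro h
          have := p.inj i 0 (by omega) (by omega) (by rw [h, p.first])
          omega
        · intro h
          have := p.inj i p.len (by omega) le_rfl (by rw [h, p.last])
          omega
      exact (hfacts i hi0 hil).2 hnc hmem
  intro i hi0 hil
  exact ⟨hcol i hi0 hil, hca i hi0 hil (hcol i hi0 hil)⟩


/-- In a MAG `G`, for `Y ∈ Mb(X)`: `Y` is a neighbor of `X` iff no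
proper subset `S ⊊ Mb(X) ∖ {Y}` m-separates `X` and `Y` in `G`. -/
theorem stmt_8 {V : Type*} [Fintype V] (G : MixedGraph V) (hG : G.IsMAG)
    (x : V) (hx : x ∈ G.verts) (y : V) (hy : y ∈ G.mb x) :
    y ∈ G.neighbors x ↔ ∀ S : Set V, S ⊂ G.mb x \ {y} → ¬ mSep G x y S := by
  obtain ⟨hyx, q, hq⟩ := hy
  have hyv : y ∈ G.verts := by
    have := q.mem 0 (Nat.zero_le _)
    rwa [q.first] at this
  constructor
  · rintro ⟨-, hadj⟩ S hS hm
    obtain ⟨e, he⟩ : ∃ e, edirValid G x y e := by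
      rcases hadj with h | h | h
      exacts [⟨.fwd, h⟩, ⟨.bwd, h⟩, ⟨.bidir, h⟩]
    obtain ⟨i, hi0, hi1, -⟩ := hm (MPath.single8 hyx.symm hx hyv e he)
    have hlen : (MPath.single8 (G := G) hyx.symm hx hyv e he).len = 1 := rfl
    omega
  · intro H
    refine ⟨hyx, ?_⟩
    by_contra hadj
    obtain ⟨Z, hZsub, hZ⟩ := hG.maximal x hx y hyv hyx.symm hadj
    have hds : mSep G x y (dsep8 G x y) := by
      intro p
      by_contra hnb
      have hkey := key8 p hnb
      obtain ⟨i, hi0, hil, hcase⟩ := hZ p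
      obtain ⟨hc, hanc⟩ := hkey i hi0 hil
      rcases hcase with ⟨-, hall⟩ | ⟨hnc, -⟩
      · rcases hanc with h | h
        · exact hall x (Or.inr (by simp)) h
        · exact hall y (Or.inr (by simp)) h
      · exact hnc hc
    have hnotT : ¬ mSep G x y (G.mb x \ {y}) := mb_not_sep8 q hq
    have hss : dsep8 G x y ⊂ G.mb x \ {y} := by
      refine ⟨dsep8_subset, fun h => hnotT ?_⟩
      have heq : dsep8 G x y = G.mb x \ {y} := Set.Subset.antisymm dsep8_subset h
      rwa [heq] at hds
    exact H _ hss hds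
end
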